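/- arXiv:2010.03857 — 9 statements merged into one kernel-verified Lean document; each statement's English description precedes it below -/
import Mathlib

section
/- Given reals $b, c \in [0,1]$ and $d \in (0,1]$ with $c + d \ge 1$, it holds that $b^c(c + d\, b^d) \ge b$. -/
theorem rpow_mul_ge (b c d : ℝ) (hb : b ∈ Set.Icc (0:ℝ) 1) (hc : c ∈ Set.Icc (0:ℝ) 1)
    (hd : d ∈ Set.Ioc (0:ℝ) 1) (hcd : c + d ≥ 1) :
    b ^ c * (c + d * b ^ d) ≥ b := by
  obtain ⟨hb0, hb1⟩ := hb
  obtain ⟨hc0, hc1⟩ := hc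
  have weighted_am_gm : b ^ (1 - c) ≤ c + (1 - c) * b := by
    simpa using Real.geom_mean_le_arith_mean2_weighted hc0 (sub_nonneg.2 hc1) zero_le_one hb0
      (add_sub_cancel c 1)
  have tail_le : (1 - c) * b ≤ d * b ^ d :=
    mul_le_mul (by linarith) (Real.self_le_rpow_of_le_one hb0 hb1 hd.2) hb0 hd.1.le
  calc b = b ^ c * b ^ (1 - c) := by
        rw [← Real.rpow_add' hb0 (by norm_num), add_sub_cancel, Real.rpow_one]
    _ ≤ b ^ c * (c + d * b ^ d) := by gcongr; linarith
end

section
/- Let $\eta > 0$, $C > 0$, and suppose that at each step $t = 1,\dots,T$ and each index $d = 1,\dots,D_t$ the learner's loss satisfies $\lambda_{t,d}^{\gamma} \le -\frac{C}{\eta} \ln \sum_{i=1}^N w_{t-1}^*(i) e^{-\eta \lambda_{t,d}(i)}$, where $w_{t-1}^*(i) = w_{t-1}(i)/\sum_j w_{t-1}(j)$ with $w_0(i) > 0$ and $w_t(i) = w_{t-1}(i) e^{-(\eta/D_t)\sum_{d=1}^{D_t} \lambda_{t,d}(i)}$, and all $\lambda_{t,d}(i) \ge 0$. Then for every expert $i$,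 $\sum_{t=1}^T \frac{1}{D_t}\sum_{d=1}^{D_t} \lambda_{t,d}^{\gamma} \le C \sum_{t=1}^T \frac{1}{D_t} \sum_{d=1}^{D_t} \lambda_{t,d}(i) + \frac{C}{\eta} \ln \frac{1}{w_0^*(i)}$, where $w_0^*(i) = w_0(i)/\sum_j w_0(j)$. -/
/-!
Potential argument with `Φ t = log ∑ j, w t j`. At each pack position the learner's loss is at
most `-(C/η)` times the log of the mixture `∑ j, w*_{t-1} j * exp (-η λ_{t,d} j)`. Since the weights
are updated with the pack-averaged loss, convexity of `x ↦ log ∑ j, p j * exp (x j)` (Hölder's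
inequality) shows that the average of these logs dominates `Φ t - Φ (t-1)`, so the pack-averaged
learner loss is at most `(C/η) (Φ (t-1) - Φ t)`. Summing telescopes to `(C/η) (Φ 0 - Φ T)`, and
`Φ T ≥ log (w T i) = log (w 0 i) - η ∑ₜ λ̄ₜ i`.
-/

open Finset Real

lemma sum_mul_exp_pos {ι : Type*} [Fintype ι] {p : ι → ℝ} (hp : ∀ j, 0 ≤ p j)
    (hp₀ : 0 < ∑ j, p j) (y : ι → ℝ) : 0 < ∑ j, p j * exp (y j) := by
  obtain ⟨j, -, hj⟩ := exists_lt_of_sum_lt (s := univ) (f := fun _ => 0) (g := p)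
    (by rwa [sum_const_zero])
  exact sum_pos' (fun k _ => mul_nonneg (hp k) (exp_pos _).le)
    ⟨j, mem_univ j, mul_pos hj (exp_pos _)⟩

lemma log_sum_mul_exp_sum_le {ι κ : Type*} [Fintype ι] {p : ι → ℝ} (hp : ∀ j, 0 ≤ p j)
    (hp₁ : ∑ j, p j = 1) {s : Finset κ} {q : κ → ℝ} (hq : ∀ d ∈ s, 0 ≤ q d)
    (hq₁ : ∑ d ∈ s, q d = 1) (x : κ → ι → ℝ) :
    log (∑ j, p j * exp (∑ d ∈ s, q d * x d j)) ≤
      ∑ d ∈ s, q d * log (∑ j, p j * exp (x d j)) := by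
  set S := fun d => ∑ j, p j * exp (x d j)
  have hS : ∀ d, 0 < S d := fun d => sum_mul_exp_pos hp (hp₁ ▸ one_pos) _
  set m := ∑ d ∈ s, q d * log (S d)
  have jensen : ∀ j, exp (∑ d ∈ s, q d * x d j) ≤ exp m * ∑ d ∈ s, q d * (exp (x d j) / S d) := by
    intro j
    have := convexOn_exp.map_sum_le hq hq₁ (fun d _ => Set.mem_univ (x d j - log (S d)))
    simp only [smul_eq_mul, mul_sub, sum_sub_distrib, exp_sub, exp_log (hS _)] at this
    rwa [div_le_iff₀ (exp_pos _), mul_comm] at this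
  rw [log_le_iff_le_exp (sum_mul_exp_pos hp (hp₁ ▸ one_pos) _)]
  calc ∑ j, p j * exp (∑ d ∈ s, q d * x d j)
      ≤ ∑ j, p j * (exp m * ∑ d ∈ s, q d * (exp (x d j) / S d)) :=
        sum_le_sum fun j _ => mul_le_mul_of_nonneg_left (jensen j) (hp j)
    _ = exp m * ∑ d ∈ s, q d * (S d / S d) := by
        simp only [S, mul_sum, sum_div]
        rw [sum_comm]
        exact sum_congr rfl fun d _ => sum_congr rfl fun j _ => by ring
    _ = exp m := by simp [div_self (hS _).ne', hq₁]

lemma mean_le_mul_log_sum_sub_log_sum {ι : Type*} [Fintype ι] {v : ι → ℝ}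
    (hv : ∀ j, 0 ≤ v j) (hV : 0 < ∑ j, v j) {η C : ℝ} (hCη : 0 ≤ C / η) (D : ℕ)
    (ℓ : ℕ → ι → ℝ) (ℓL : ℕ → ℝ)
    (hmix : ∀ d < D, ℓL d ≤ -(C / η) * log (∑ j, (v j / ∑ k, v k) * exp (-η * ℓ d j))) :
    (1 / (D : ℝ)) * ∑ d ∈ range D, ℓL d ≤
      (C / η) * (log (∑ j, v j) - log (∑ j, v j * exp (-(η / D) * ∑ d ∈ range D, ℓ d j))) := by
  rcases D.eq_zero_or_pos with rfl | hD
  · simp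
  set p := fun j => v j / ∑ k, v k
  have hp : ∀ j, 0 ≤ p j := fun j => div_nonneg (hv j) hV.le
  have hp₁ : ∑ j, p j = 1 := by simp only [p, ← sum_div, div_self hV.ne']
  have hDinv : ∀ d ∈ range D, (0 : ℝ) ≤ 1 / D := fun _ _ => by positivity
  have hDinv₁ : ∑ _d ∈ range D, (1 : ℝ) / D = 1 := by
    simp only [sum_const, card_range, nsmul_eq_mul]; field_simp
  have hconv := log_sum_mul_exp_sum_le hp hp₁ hDinv hDinv₁ fun d j => -η * ℓ d j
  have hfactor : ∑ j, v j * exp (-(η / D) * ∑ d ∈ range D, ℓ d j) =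
      (∑ k, v k) * ∑ j, p j * exp (∑ d ∈ range D, 1 / (D : ℝ) * (-η * ℓ d j)) := by
    rw [mul_sum]
    refine sum_congr rfl fun j _ => ?_
    rw [← mul_assoc, mul_div_cancel₀ _ hV.ne', ← mul_sum, ← mul_sum]
    ring_nf
  rw [hfactor, log_mul hV.ne' (sum_mul_exp_pos hp (hp₁ ▸ one_pos) _).ne']
  calc (1 / (D : ℝ)) * ∑ d ∈ range D, ℓL d
      ≤ (1 / (D : ℝ)) * ∑ d ∈ range D, -(C / η) * log (∑ j, p j * exp (-η * ℓ d j)) :=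
        mul_le_mul_of_nonneg_left (sum_le_sum fun d hd => hmix d (mem_range.1 hd)) (by positivity)
    _ = -(C / η) * ∑ d ∈ range D, 1 / (D : ℝ) * log (∑ j, p j * exp (-η * ℓ d j)) := by
        simp only [mul_sum]; exact sum_congr rfl fun d _ => by ring
    _ ≤ -(C / η) * log (∑ j, p j * exp (∑ d ∈ range D, 1 / (D : ℝ) * (-η * ℓ d j))) :=
        mul_le_mul_of_nonpos_left hconv (neg_nonpos.2 hCη)
    _ = _ := by ring

lemma sum_Icc_one_sub_sub {M : Type*} [AddCommGroup M] (f : ℕ → M) (T : ℕ) :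
    ∑ t ∈ Icc 1 T, (f (t - 1) - f t) = f 0 - f T := by
  induction T with
  | zero => simp
  | succ n ih => rw [sum_Icc_succ_top (by omega), ih]; simp

lemma eq_mul_exp_sum_of_eq_mul_exp {u a : ℕ → ℝ} {T : ℕ}
    (h : ∀ t, 1 ≤ t → t ≤ T → u t = u (t - 1) * exp (a t)) :
    ∀ t ≤ T, u t = u 0 * exp (∑ s ∈ Icc 1 t, a s) := by
  intro t
  induction t with
  | zero => simp
  | succ t ih =>
    intro ht
    rw [h _ (by omega) ht, Nat.add_sub_cancel, ih (by omega), sum_Icc_succ_top (by omega),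
      exp_add, mul_assoc]

theorem aap_current_bound_general (N T : ℕ) (D : ℕ → ℕ)
    (η C : ℝ) (hη : 0 < η) (hC : 0 < C)
    (lossE : ℕ → ℕ → Fin N → ℝ)
    (lossL : ℕ → ℕ → ℝ)
    (w : ℕ → Fin N → ℝ) (hw0 : ∀ i, 0 < w 0 i)
    (hrec : ∀ t, 1 ≤ t → t ≤ T → ∀ i,
      w t i = w (t - 1) i *
        Real.exp (-(η / D t) * ∑ d ∈ Finset.range (D t), lossE t d i))
    (hmix : ∀ t, 1 ≤ t → t ≤ T → ∀ d < D t,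
      lossL t d ≤ -(C / η) *
        Real.log (∑ i, (w (t - 1) i / ∑ j, w (t - 1) j) *
          Real.exp (-η * lossE t d i)))
    (i : Fin N) :
    ∑ t ∈ Finset.Icc 1 T, (1 / (D t : ℝ)) * ∑ d ∈ Finset.range (D t), lossL t d ≤
      C * ∑ t ∈ Finset.Icc 1 T, (1 / (D t : ℝ)) * ∑ d ∈ Finset.range (D t), lossE t d i +
        (C / η) * Real.log (1 / (w 0 i / ∑ j, w 0 j)) := by
  have hclosed j := eq_mul_exp_sum_of_eq_mul_exp (u := (w · j)) fun t h₁ h₂ => hrec t h₁ h₂ j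
  have hw : ∀ t ≤ T, ∀ j, 0 < w t j := fun t ht j => by
    rw [hclosed j t ht]; exact mul_pos (hw0 j) (exp_pos _)
  have hW : ∀ t ≤ T, 0 < ∑ j, w t j := fun t ht => sum_pos (fun j _ => hw t ht j) ⟨i, mem_univ i⟩
  have hpotential : ∑ t ∈ Icc 1 T, (1 / (D t : ℝ)) * ∑ d ∈ range (D t), lossL t d ≤
      C / η * (log (∑ j, w 0 j) - log (∑ j, w T j)) := by
    rw [← sum_Icc_one_sub_sub fun t => log (∑ j, w t j), mul_sum]
    refine sum_le_sum fun t ht => ?_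
    obtain ⟨ht₁, htT⟩ := mem_Icc.1 ht
    rw [sum_congr rfl fun j _ => hrec t ht₁ htT j]
    exact mean_le_mul_log_sum_sub_log_sum (fun j => (hw _ (by omega) j).le) (hW _ (by omega))
      (div_pos hC hη).le _ _ _ (hmix t ht₁ htT)
  have hexpert : log (w T i) = log (w 0 i) -
      η * ∑ t ∈ Icc 1 T, (1 / (D t : ℝ)) * ∑ d ∈ range (D t), lossE t d i := by
    rw [hclosed i T le_rfl, log_mul (hw0 i).ne' (exp_pos _).ne', log_exp, sub_eq_add_neg,
      mul_sum, ← sum_neg_distrib]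
    exact congrArg _ (sum_congr rfl fun _ _ => by ring)
  have hsingle : log (w T i) ≤ log (∑ j, w T j) :=
    log_le_log (hw T le_rfl i) (single_le_sum (fun j _ => (hw T le_rfl j).le) (mem_univ i))
  rw [one_div, log_inv, log_div (hw0 i).ne' (hW 0 T.zero_le).ne']
  calc _ ≤ C / η * (log (∑ j, w 0 j) - log (∑ j, w T j)) := hpotential
    _ ≤ C / η * (log (∑ j, w 0 j) - log (w T i)) := by gcongr
    _ = _ := by rw [hexpert]; field_simp; ring

theorem aap_current_bound (N T : ℕ) (hN : 1 ≤ N) (D : ℕ → ℕ) (hD : ∀ t, 1 ≤ D t)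
    (η C : ℝ) (hη : 0 < η) (hC : 0 < C)
    (lossE : ℕ → ℕ → Fin N → ℝ) (hlossE : ∀ t d i, 0 ≤ lossE t d i)
    (lossL : ℕ → ℕ → ℝ)
    (w : ℕ → Fin N → ℝ) (hw0 : ∀ i, 0 < w 0 i)
    (hrec : ∀ t, 1 ≤ t → t ≤ T → ∀ i,
      w t i = w (t - 1) i *
        Real.exp (-(η / D t) * ∑ d ∈ Finset.range (D t), lossE t d i))
    (hmix : ∀ t, 1 ≤ t → t ≤ T → ∀ d < D t,
      lossL t d ≤ -(C / η) *
        Real.log (∑ i, (w (t - 1) i / ∑ j, w (t - 1) j) *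
          Real.exp (-η * lossE t d i)))
    (i : Fin N) :
    ∑ t ∈ Finset.Icc 1 T, (1 / (D t : ℝ)) * ∑ d ∈ Finset.range (D t), lossL t d ≤
      C * ∑ t ∈ Finset.Icc 1 T, (1 / (D t : ℝ)) * ∑ d ∈ Finset.range (D t), lossE t d i +
        (C / η) * Real.log (1 / (w 0 i / ∑ j, w 0 j)) :=
  aap_current_bound_general N T D η C hη hC lossE lossL w hw0 hrec hmix i
end

section
/- (Fixed-share regret under delayed feedback.) Consider $N \ge 2$ experts with nonnegative average losses $\ell_t(i)$ at steps $t = 1,\dots,T$, weights initialized as $\tilde w_0(i) = 1/N$ and updated by $w_t(i) = \tilde w_{t-1}(i) e^{-\eta \ell_t(i)}$ followed by the Fixed-share update $\tilde w_t(i) = (1-\alpha) w_t(i) + \frac{\alpha}{N-1} \sum_{j\ne i} w_t(j)$, with $\eta > 0$ and $\alpha \in (0,1)$. Suppose the learner's average loss at each step satisfies $\ell_t^{\gamma} \le -\frac{C}{\eta} \ln \frac{\sum_i w_t(i)}{\sum_i \tilde w_{t-1}(i)}$ for some $C > 0$. Then for any superexpert determined by switch times $1 = t_0 < t_1 < \dots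 < t_{k+1} = T+1$ and experts $e_0, \dots, e_k$ with $e_{j} \ne e_{j+1}$, whose loss on step $t \in [t_j, t_{j+1})$ is $\ell_t(e_j)$, it holds that $\sum_{t=1}^T \ell_t^{\gamma} \le C \sum_{j=0}^{k} \sum_{t=t_j}^{t_{j+1}-1} \ell_t(e_j) + \frac{C}{\eta}\left( \ln N + k \ln \frac{N-1}{\alpha} + (T-1-k) \ln \frac{1}{1-\alpha} \right)$. -/
/-!
Fixed share conserves the total weight, so by the learner's hypothesis the cumulative loss
telescopes to at most `-(C/η) log W_T`, where `W_T` is the total weight after step `T`.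
Following the superexpert, each step of a segment costs at most a factor `(1 - α) e^{-η ℓ}` of
the followed expert's weight and each switch a factor `α/(N-1)`, so `W_T` is at least
`(1/N) (α/(N-1))^k (1-α)^(T-1-k) e^{-η L}`, `L` being the superexpert's loss; taking logs gives
the bound.
-/

open Finset Real

noncomputable def fixedShare {N : ℕ} (α : ℝ) (v : Fin N → ℝ) (i : Fin N) : ℝ :=
  (1 - α) * v i + α / (N - 1) * ∑ j ∈ univ \ {i}, v j

section FixedShare

variable {N : ℕ} {α : ℝ} {v : Fin N → ℝ}

lemma fixedShare_eq (i : Fin N) :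
    fixedShare α v i = (1 - α) * v i + α / (N - 1) * (∑ j, v j - v i) := by
  rw [fixedShare, sum_sdiff_eq_sub (subset_univ _), sum_singleton]

lemma sum_fixedShare (hN : N ≠ 1) (v : Fin N → ℝ) : ∑ i, fixedShare α v i = ∑ i, v i := by
  have : (N : ℝ) - 1 ≠ 0 := sub_ne_zero.2 (mod_cast hN)
  simp only [fixedShare_eq, sum_add_distrib, ← mul_sum, sum_sub_distrib, sum_const, card_univ,
    Fintype.card_fin, nsmul_eq_mul]
  field_simp
  ring

lemma one_sub_mul_le_fixedShare (hα : 0 ≤ α) (hv : ∀ j, 0 ≤ v j) (i : Fin N) :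
    (1 - α) * v i ≤ fixedShare α v i := by
  have hN : (1 : ℝ) ≤ N := mod_cast i.pos
  have : 0 ≤ α / (N - 1) * ∑ j ∈ univ \ {i}, v j :=
    mul_nonneg (div_nonneg hα (by linarith)) (sum_nonneg fun j _ => hv j)
  rw [fixedShare]
  linarith

lemma div_mul_le_fixedShare_of_ne (hα0 : 0 ≤ α) (hα1 : α ≤ 1) (hv : ∀ j, 0 ≤ v j) {i i' : Fin N}
    (hii' : i ≠ i') : α / (N - 1) * v i ≤ fixedShare α v i' := by
  have hN : (1 : ℝ) ≤ N := mod_cast i.pos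
  have hi : v i ≤ ∑ j ∈ univ \ {i'}, v j :=
    single_le_sum (fun j _ => hv j) (by simp [hii'])
  have := mul_le_mul_of_nonneg_left hi (div_nonneg hα0 (by linarith : (0 : ℝ) ≤ N - 1))
  have := mul_nonneg (sub_nonneg.2 hα1) (hv i')
  rw [fixedShare]
  linarith

lemma fixedShare_pos (hα0 : 0 ≤ α) (hα1 : α < 1) (hv : ∀ j, 0 < v j) (i : Fin N) :
    0 < fixedShare α v i :=
  (mul_pos (sub_pos.2 hα1) (hv i)).trans_le
    (one_sub_mul_le_fixedShare hα0 (fun j => (hv j).le) i)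

end FixedShare

lemma add_le_of_lt_succ {f : ℕ → ℕ} {k : ℕ} (hf : ∀ j ≤ k, f j < f (j + 1)) :
    ∀ j ≤ k + 1, f 0 + j ≤ f j := by
  intro j hj
  induction j with
  | zero => rfl
  | succ j ih => have := hf j (by omega); have := ih (by omega); omega

lemma sum_Icc_le_mul_sub {a f : ℕ → ℝ} {c : ℝ} (T : ℕ)
    (h : ∀ t ∈ Icc 1 T, a t ≤ c * (f (t - 1) - f t)) :
    ∑ t ∈ Icc 1 T, a t ≤ c * (f 0 - f T) := by
  induction T with
  | zero => simp
  | succ T ih =>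
    rw [sum_Icc_succ_top (by omega)]
    have h1 := ih fun t ht => h t (Icc_subset_Icc_right (by omega) ht)
    have h2 := h (T + 1) (by simp)
    simp only [Nat.add_sub_cancel] at h2
    linarith

section Dynamics

variable {N : ℕ} {η α : ℝ} {ℓ w wt : ℕ → Fin N → ℝ}

lemma wt_pos (hα0 : 0 ≤ α) (hα1 : α < 1) (h0 : ∀ i, 0 < wt 0 i)
    (hw : ∀ t, 1 ≤ t → ∀ i, w t i = wt (t - 1) i * exp (-η * ℓ t i))
    (hwt : ∀ t, 1 ≤ t → wt t = fixedShare α (w t)) (t : ℕ) (i : Fin N) : 0 < wt t i := by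
  induction t generalizing i with
  | zero => exact h0 i
  | succ t ih =>
    rw [hwt (t + 1) (by omega)]
    refine fixedShare_pos hα0 hα1 (fun j => ?_) i
    rw [hw (t + 1) (by omega), Nat.add_sub_cancel]
    exact mul_pos (ih j) (exp_pos _)

lemma w_pos (hα0 : 0 ≤ α) (hα1 : α < 1) (h0 : ∀ i, 0 < wt 0 i)
    (hw : ∀ t, 1 ≤ t → ∀ i, w t i = wt (t - 1) i * exp (-η * ℓ t i))
    (hwt : ∀ t, 1 ≤ t → wt t = fixedShare α (w t)) (t : ℕ) (ht : 1 ≤ t) (i : Fin N) :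
    0 < w t i := by
  rw [hw t ht i]
  exact mul_pos (wt_pos hα0 hα1 h0 hw hwt _ _) (exp_pos _)

lemma le_weight_of_stay (hα0 : 0 ≤ α) (hα1 : α ≤ 1)
    (hw : ∀ t, 1 ≤ t → ∀ i, w t i = wt (t - 1) i * exp (-η * ℓ t i))
    (hwt : ∀ t, 1 ≤ t → wt t = fixedShare α (w t)) (hw_nonneg : ∀ t, 1 ≤ t → ∀ i, 0 ≤ w t i)
    {a b : ℕ} (ha : 1 ≤ a) (hab : a < b) (i : Fin N) :
    wt (a - 1) i * (1 - α) ^ (b - 1 - a) * exp (-η * ∑ t ∈ Ico a b, ℓ t i) ≤ w (b - 1) i := by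
  induction b, hab using Nat.le_induction with
  | base => simp [hw a ha i]
  | succ b hab ih =>
    have hb : 1 ≤ b - 1 := by omega
    have hstay := one_sub_mul_le_fixedShare hα0 (hw_nonneg (b - 1) hb) i
    rw [← hwt (b - 1) hb] at hstay
    calc _ = wt (a - 1) i * (1 - α) ^ (b - 1 - a) * exp (-η * ∑ t ∈ Ico a b, ℓ t i) *
            ((1 - α) * exp (-η * ℓ b i)) := by
          rw [sum_Ico_succ_top (by omega), show b + 1 - 1 - a = b - 1 - a + 1 by omega, pow_succ,
            mul_add, exp_add]
          ring
      _ ≤ w (b - 1) i * ((1 - α) * exp (-η * ℓ b i)) := by gcongr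
      _ ≤ wt (b - 1) i * exp (-η * ℓ b i) := by
          rw [← mul_assoc, mul_comm (w (b - 1) i)]
          exact mul_le_mul_of_nonneg_right hstay (exp_pos _).le
      _ = w (b + 1 - 1) i := by rw [Nat.add_sub_cancel, hw b (by omega) i]

-- Each step of a segment but its first keeps a factor `1 - α`: `tseq (j + 1) - 2 - j` of them
-- up to the end of segment `j`.
lemma le_weight_of_superexpert (hα0 : 0 ≤ α) (hα1 : α ≤ 1)
    (hw : ∀ t, 1 ≤ t → ∀ i, w t i = wt (t - 1) i * exp (-η * ℓ t i))
    (hwt : ∀ t, 1 ≤ t → wt t = fixedShare α (w t)) (hw_nonneg : ∀ t, 1 ≤ t → ∀ i, 0 ≤ w t i)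
    {k : ℕ} {tseq : ℕ → ℕ} {e : ℕ → Fin N} (ht0 : tseq 0 = 1)
    (hmono : ∀ j ≤ k, tseq j < tseq (j + 1)) (he : ∀ j < k, e j ≠ e (j + 1)) :
    ∀ j ≤ k, wt 0 (e 0) * (α / (N - 1)) ^ j * (1 - α) ^ (tseq (j + 1) - 2 - j) *
        exp (-η * ∑ m ∈ range (j + 1), ∑ t ∈ Ico (tseq m) (tseq (m + 1)), ℓ t (e m)) ≤
      w (tseq (j + 1) - 1) (e j) := by
  have htseq := add_le_of_lt_succ hmono
  have hN : (1 : ℝ) ≤ N := mod_cast (e 0).pos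
  intro j hj
  induction j with
  | zero =>
    simpa [ht0, Nat.sub_sub] using
      le_weight_of_stay hα0 hα1 hw hwt hw_nonneg (le_of_eq ht0.symm) (hmono 0 (Nat.zero_le k)) (e 0)
  | succ j ih =>
    set a := tseq (j + 1)
    set b := tseq (j + 2)
    have ha : j + 2 ≤ a := by have := htseq (j + 1) (by omega); omega
    have hab : a < b := hmono (j + 1) hj
    have hswitch := div_mul_le_fixedShare_of_ne hα0 hα1 (hw_nonneg (a - 1) (by omega)) (he j hj)
    rw [← hwt (a - 1) (by omega)] at hswitch
    have hstay := le_weight_of_stay hα0 hα1 hw hwt hw_nonneg (by omega) hab (e (j + 1))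
    have hαN : 0 ≤ α / (N - 1) := div_nonneg hα0 (by linarith)
    calc _ = α / (N - 1) * (wt 0 (e 0) * (α / (N - 1)) ^ j * (1 - α) ^ (a - 2 - j) *
            exp (-η * ∑ m ∈ range (j + 1), ∑ t ∈ Ico (tseq m) (tseq (m + 1)), ℓ t (e m))) *
            ((1 - α) ^ (b - 1 - a) * exp (-η * ∑ t ∈ Ico a b, ℓ t (e (j + 1)))) := by
          rw [sum_range_succ _ (j + 1), show b - 2 - (j + 1) = a - 2 - j + (b - 1 - a) by omega,
            pow_add, pow_succ, mul_add, exp_add]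
          ring
      _ ≤ α / (N - 1) * w (a - 1) (e j) *
            ((1 - α) ^ (b - 1 - a) * exp (-η * ∑ t ∈ Ico a b, ℓ t (e (j + 1)))) := by
          gcongr
          exact ih (by omega)
      _ ≤ wt (a - 1) (e (j + 1)) *
            ((1 - α) ^ (b - 1 - a) * exp (-η * ∑ t ∈ Ico a b, ℓ t (e (j + 1)))) := by gcongr
      _ ≤ w (b - 1) (e (j + 1)) := by rw [← mul_assoc]; exact hstay

lemma sum_le_mul_log_sub_log {C : ℝ} {ℓγ : ℕ → ℝ} {T : ℕ} (hN : 1 < N)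
    (hwt_pos : ∀ t i, 0 < wt t i) (hw_pos : ∀ t, 1 ≤ t → ∀ i, 0 < w t i)
    (hwt : ∀ t, 1 ≤ t → wt t = fixedShare α (w t))
    (hlearner : ∀ t, 1 ≤ t → t ≤ T →
      ℓγ t ≤ -(C / η) * log ((∑ i, w t i) / (∑ i, wt (t - 1) i))) :
    ∑ t ∈ Icc 1 T, ℓγ t ≤ C / η * (log (∑ i, wt 0 i) - log (∑ i, wt T i)) := by
  have hne : (univ : Finset (Fin N)).Nonempty := univ_nonempty_iff.2 ⟨⟨0, by omega⟩⟩
  refine sum_Icc_le_mul_sub (f := fun t => log (∑ i, wt t i)) T fun t ht => ?_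
  obtain ⟨ht1, htT⟩ := mem_Icc.1 ht
  have hmass : ∑ i, wt t i = ∑ i, w t i := by rw [hwt t ht1, sum_fixedShare hN.ne']
  have hlog := log_div (sum_pos (fun i _ => hw_pos t ht1 i) hne).ne'
    (sum_pos (fun i _ => hwt_pos (t - 1) i) hne).ne'
  have := hlearner t ht1 htT
  rw [hlog, ← hmass] at this
  linarith

end Dynamics

lemma sub_le_log_of_weight_le {N : ℕ} {α x y : ℝ} (hN : 1 < N) (hα0 : 0 < α) (hα1 : α < 1)
    {k m : ℕ} (hy : 1 / N * (α / (N - 1)) ^ k * (1 - α) ^ m * exp x ≤ y) :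
    x - (log N + k * log ((N - 1) / α) + m * log (1 / (1 - α))) ≤ log y := by
  have hN' : (0 : ℝ) < N - 1 := by
    have : (1 : ℝ) < N := mod_cast hN
    linarith
  have h1α : 0 < 1 - α := by linarith
  have hαN : 0 < α / (N - 1) := div_pos hα0 hN'
  have hB : 0 < 1 / (N : ℝ) * (α / (N - 1)) ^ k * (1 - α) ^ m * exp x := by positivity
  refine le_of_eq_of_le ?_ (log_le_log hB hy)
  rw [log_mul (by positivity) (exp_pos x).ne', log_mul (by positivity) (by positivity),
    log_mul (by positivity) (by positivity), log_exp, log_pow, log_pow, log_div hα0.ne' hN'.ne',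
    log_div hN'.ne' hα0.ne', one_div, one_div, log_inv, log_inv]
  ring

theorem fixed_share_regret_general (N T k : ℕ) (hN : 2 ≤ N) (η α C : ℝ)
    (hη : 0 < η) (hα : α ∈ Set.Ioo (0:ℝ) 1) (hC : 0 < C)
    (ℓ : ℕ → Fin N → ℝ)
    (w wt : ℕ → Fin N → ℝ)
    (hinit : ∀ i, wt 0 i = 1 / N)
    (hw : ∀ t, 1 ≤ t → ∀ i, w t i = wt (t - 1) i * Real.exp (-η * ℓ t i))
    (hwt : ∀ t, 1 ≤ t → ∀ i,
      wt t i = (1 - α) * w t i + (α / (N - 1)) * ∑ j ∈ Finset.univ \ {i}, w t j)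
    (ℓγ : ℕ → ℝ)
    (hlearner : ∀ t, 1 ≤ t → t ≤ T →
      ℓγ t ≤ -(C / η) * Real.log ((∑ i, w t i) / (∑ i, wt (t - 1) i)))
    (tseq : ℕ → ℕ) (e : ℕ → Fin N)
    (ht0 : tseq 0 = 1) (htk : tseq (k + 1) = T + 1)
    (hmono : ∀ j, j ≤ k → tseq j < tseq (j + 1))
    (he : ∀ j, j < k → e j ≠ e (j + 1)) :
    ∑ t ∈ Finset.Icc 1 T, ℓγ t ≤
      C * ∑ j ∈ Finset.range (k + 1), ∑ t ∈ Finset.Ico (tseq j) (tseq (j + 1)), ℓ t (e j) +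
        (C / η) * (Real.log N + k * Real.log ((N - 1) / α) +
          ((T : ℝ) - 1 - k) * Real.log (1 / (1 - α))) := by
  obtain ⟨hα0, hα1⟩ := hα
  set L := ∑ j ∈ range (k + 1), ∑ t ∈ Ico (tseq j) (tseq (j + 1)), ℓ t (e j)
  have hwt' : ∀ t, 1 ≤ t → wt t = fixedShare α (w t) := fun t ht => funext (hwt t ht)
  have h0 : ∀ i, 0 < wt 0 i := fun i => by rw [hinit]; positivity
  have hw_pos := w_pos hα0.le hα1 h0 hw hwt'
  have hT : k + 1 ≤ T := by have := add_le_of_lt_succ hmono (k + 1) le_rfl; omega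
  have hsuper := le_weight_of_superexpert hα0.le hα1.le hw hwt' (fun t ht i => (hw_pos t ht i).le)
    ht0 hmono he k le_rfl
  rw [htk, hinit, show T + 1 - 2 - k = T - 1 - k by omega, Nat.add_sub_cancel] at hsuper
  have hlogT := sub_le_log_of_weight_le hN hα0 hα1 (hsuper.trans
    (single_le_sum (fun i _ => (hw_pos T (by omega) i).le) (mem_univ (e k))))
  rw [← sum_fixedShare (α := α) (by omega), ← hwt' T (by omega),
    Nat.cast_sub (by omega), Nat.cast_sub (by omega), Nat.cast_one] at hlogT
  have hregret := sum_le_mul_log_sub_log hN (wt_pos hα0.le hα1 h0 hw hwt') hw_pos hwt' hlearner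
  rw [sum_congr rfl fun i _ => hinit i, sum_const, card_univ, Fintype.card_fin, nsmul_eq_mul,
    mul_one_div_cancel (mod_cast (by omega : N ≠ 0)), log_one] at hregret
  calc _ ≤ C / η * (0 - log (∑ i, wt T i)) := hregret
    _ ≤ C / η * (η * L + (log N + k * log ((N - 1) / α) + (T - 1 - k) * log (1 / (1 - α)))) :=
      mul_le_mul_of_nonneg_left (by linarith) (by positivity)
    _ = _ := by field_simp

theorem fixed_share_regret (N T k : ℕ) (hN : 2 ≤ N) (η α C : ℝ)
    (hη : 0 < η) (hα : α ∈ Set.Ioo (0:ℝ) 1) (hC : 0 < C)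
    (ℓ : ℕ → Fin N → ℝ) (hℓ : ∀ t i, 0 ≤ ℓ t i)
    (w wt : ℕ → Fin N → ℝ)
    (hinit : ∀ i, wt 0 i = 1 / N)
    (hw : ∀ t, 1 ≤ t → ∀ i, w t i = wt (t - 1) i * Real.exp (-η * ℓ t i))
    (hwt : ∀ t, 1 ≤ t → ∀ i,
      wt t i = (1 - α) * w t i + (α / (N - 1)) * ∑ j ∈ Finset.univ \ {i}, w t j)
    (ℓγ : ℕ → ℝ)
    (hlearner : ∀ t, 1 ≤ t → t ≤ T →
      ℓγ t ≤ -(C / η) * Real.log ((∑ i, w t i) / (∑ i, wt (t - 1) i)))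
    (tseq : ℕ → ℕ) (e : ℕ → Fin N)
    (ht0 : tseq 0 = 1) (htk : tseq (k + 1) = T + 1)
    (hmono : ∀ j, j ≤ k → tseq j < tseq (j + 1))
    (he : ∀ j, j < k → e j ≠ e (j + 1)) :
    ∑ t ∈ Finset.Icc 1 T, ℓγ t ≤
      C * ∑ j ∈ Finset.range (k + 1), ∑ t ∈ Finset.Ico (tseq j) (tseq (j + 1)), ℓ t (e j) +
        (C / η) * (Real.log N + k * Real.log ((N - 1) / α) +
          ((T : ℝ) - 1 - k) * Real.log (1 / (1 - α))) :=
  fixed_share_regret_general N T k hN η α C hη hα hC ℓ w wt hinit hw hwt ℓγ hlearner tseq e ht0 htk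
    hmono he
end

section
/- Let $\eta > 0$, $\alpha \in (0,1)$, $N \ge 2$, and nonnegative average losses $\ell_t(i)$. Define the Variable-share update $\tilde w_t(i) = (1-\alpha)^{\ell_t(i)} w_t(i) + \frac{1}{N-1} \sum_{j \ne i} \left(1 - (1-\alpha)^{\ell_t(j)}\right) w_t(j)$ with $w_t(i) = \tilde w_{t-1}(i) e^{-\eta \ell_t(i)}$ and all $\tilde w_{t-1}(i) > 0$. Then: (a) $\tilde w_t(i) \ge \tilde w_{t-1}(i) \left[e^{-\eta}(1-\alpha)\right]^{\ell_t(i)}$; and (b) if additionally $\ell_t(j) \in [0,1]$ for all $j$, then for any $j \ne i$, $\tilde w_t(i) \ge \tilde w_{t-1}(j) e^{-\eta \ell_t(j)} \frac{\alpha}{N-1} \ell_t(j)$. -/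
/-!
Expert `i` keeps the fraction `(1 - α) ^ ℓ i` of its loss-updated weight and receives a
nonnegative share from every other expert, which gives (a) after dropping the incoming shares.
For (b) keep only the share coming from `j`: by concavity of `r ↦ (1 - α) ^ r`,
expert `j` gives away at least the fraction `α ℓ j` of its weight.
-/

open Finset

lemma mul_le_one_sub_one_sub_rpow {α r : ℝ} (hα : α ≤ 1) (hr₀ : 0 ≤ r) (hr₁ : r ≤ 1) :
    α * r ≤ 1 - (1 - α) ^ r := by
  have h := rpow_one_add_le_one_add_mul_self (s := -α) (by linarith) hr₀ hr₁
  rw [← sub_eq_add_neg] at h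
  linarith

lemma one_sub_one_sub_rpow_nonneg {α r : ℝ} (hα₀ : 0 ≤ α) (hα₁ : α ≤ 1) (hr : 0 ≤ r) :
    0 ≤ 1 - (1 - α) ^ r :=
  sub_nonneg.2 (Real.rpow_le_one (by linarith) (by linarith) hr)

section VariableShare

variable {ι : Type*} [Fintype ι] [DecidableEq ι]

/-- The paper takes the sharing coefficient `c = 1 / (N - 1)`. -/
noncomputable def variableShare (α c : ℝ) (ℓ w : ι → ℝ) (i : ι) : ℝ :=
  (1 - α) ^ ℓ i * w i + c * ∑ j ∈ univ \ {i}, (1 - (1 - α) ^ ℓ j) * w j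

variable {α c : ℝ} {ℓ w : ι → ℝ}

lemma le_sum_shares (hα₀ : 0 ≤ α) (hα₁ : α ≤ 1) (hℓ : ∀ j, 0 ≤ ℓ j) (hw : ∀ j, 0 ≤ w j)
    {i j : ι} (hji : j ≠ i) :
    (1 - (1 - α) ^ ℓ j) * w j ≤ ∑ k ∈ univ \ {i}, (1 - (1 - α) ^ ℓ k) * w k :=
  single_le_sum (fun k _ => mul_nonneg (one_sub_one_sub_rpow_nonneg hα₀ hα₁ (hℓ k)) (hw k))
    (by simpa using hji)

lemma kept_le_variableShare (hc : 0 ≤ c) (hα₀ : 0 ≤ α) (hα₁ : α ≤ 1) (hℓ : ∀ j, 0 ≤ ℓ j)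
    (hw : ∀ j, 0 ≤ w j) (i : ι) :
    (1 - α) ^ ℓ i * w i ≤ variableShare α c ℓ w i := by
  have hshares : 0 ≤ ∑ k ∈ univ \ {i}, (1 - (1 - α) ^ ℓ k) * w k :=
    sum_nonneg fun k _ => mul_nonneg (one_sub_one_sub_rpow_nonneg hα₀ hα₁ (hℓ k)) (hw k)
  exact le_add_of_nonneg_right (mul_nonneg hc hshares)

lemma share_le_variableShare (hc : 0 ≤ c) (hα₀ : 0 ≤ α) (hα₁ : α ≤ 1) (hℓ : ∀ j, 0 ≤ ℓ j)
    (hℓ₁ : ∀ j, ℓ j ≤ 1) (hw : ∀ j, 0 ≤ w j) {i j : ι} (hji : j ≠ i) :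
    c * (α * ℓ j * w j) ≤ variableShare α c ℓ w i := by
  have hkept : 0 ≤ (1 - α) ^ ℓ i * w i :=
    mul_nonneg (Real.rpow_nonneg (by linarith) _) (hw i)
  have hgiven : α * ℓ j * w j ≤ (1 - (1 - α) ^ ℓ j) * w j :=
    mul_le_mul_of_nonneg_right (mul_le_one_sub_one_sub_rpow hα₁ (hℓ j) (hℓ₁ j)) (hw j)
  exact le_add_of_nonneg_of_le hkept
    (mul_le_mul_of_nonneg_left (hgiven.trans (le_sum_shares hα₀ hα₁ hℓ hw hji)) hc)

end VariableShare

theorem variable_share_step_bounds_general (N : ℕ) (η α : ℝ)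
    (hα : α ∈ Set.Ioo (0:ℝ) 1)
    (ℓ : Fin N → ℝ) (hℓ : ∀ i, 0 ≤ ℓ i)
    (wprev w wnew : Fin N → ℝ) (hpos : ∀ i, 0 < wprev i)
    (hw : ∀ i, w i = wprev i * Real.exp (-η * ℓ i))
    (hnew : ∀ i, wnew i = (1 - α) ^ (ℓ i) * w i +
      (1 / ((N : ℝ) - 1)) * ∑ j ∈ Finset.univ \ {i}, (1 - (1 - α) ^ (ℓ j)) * w j) :
    (∀ i, wnew i ≥ wprev i * (Real.exp (-η) * (1 - α)) ^ (ℓ i)) ∧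
    ((∀ j, ℓ j ≤ 1) → ∀ i j, j ≠ i →
      wnew i ≥ wprev j * Real.exp (-η * ℓ j) * (α / ((N : ℝ) - 1)) * ℓ j) := by
  obtain ⟨hα₀, hα₁⟩ := hα
  have hnew' : wnew = variableShare α (1 / ((N : ℝ) - 1)) ℓ w := funext hnew
  have hc (i : Fin N) : 0 ≤ 1 / ((N : ℝ) - 1) :=
    one_div_nonneg.2 (sub_nonneg.2 (Nat.one_le_cast.2 i.pos))
  have hw₀ (i : Fin N) : 0 ≤ w i := by
    rw [hw i]
    exact mul_nonneg (hpos i).le (Real.exp_pos _).le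
  refine ⟨fun i => ?_, fun hℓ₁ i j hji => ?_⟩
  · calc wprev i * (Real.exp (-η) * (1 - α)) ^ ℓ i = (1 - α) ^ ℓ i * w i := by
          rw [hw i, Real.mul_rpow (Real.exp_pos _).le (by linarith), ← Real.exp_mul]
          ring
      _ ≤ wnew i := hnew' ▸ kept_le_variableShare (hc i) hα₀.le hα₁.le hℓ hw₀ i
  · calc wprev j * Real.exp (-η * ℓ j) * (α / ((N : ℝ) - 1)) * ℓ j
          = 1 / ((N : ℝ) - 1) * (α * ℓ j * w j) := by rw [hw j]; ring
      _ ≤ wnew i := hnew' ▸ share_le_variableShare (hc i) hα₀.le hα₁.le hℓ hℓ₁ hw₀ hji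

theorem variable_share_step_bounds (N : ℕ) (hN : 2 ≤ N) (η α : ℝ)
    (hη : 0 < η) (hα : α ∈ Set.Ioo (0:ℝ) 1)
    (ℓ : Fin N → ℝ) (hℓ : ∀ i, 0 ≤ ℓ i)
    (wprev w wnew : Fin N → ℝ) (hpos : ∀ i, 0 < wprev i)
    (hw : ∀ i, w i = wprev i * Real.exp (-η * ℓ i))
    (hnew : ∀ i, wnew i = (1 - α) ^ (ℓ i) * w i +
      (1 / ((N : ℝ) - 1)) * ∑ j ∈ Finset.univ \ {i}, (1 - (1 - α) ^ (ℓ j)) * w j) :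
    (∀ i, wnew i ≥ wprev i * (Real.exp (-η) * (1 - α)) ^ (ℓ i)) ∧
    ((∀ j, ℓ j ≤ 1) → ∀ i j, j ≠ i →
      wnew i ≥ wprev j * Real.exp (-η * ℓ j) * (α / ((N : ℝ) - 1)) * ℓ j) :=
  variable_share_step_bounds_general N η α hα ℓ hℓ wprev w wnew hpos hw hnew
end

section
/- Let $\eta > 0$, $\alpha \in (0,1)$, $N \ge 2$, and let losses $\ell_r(p), \ell_r(q) \in [0,1]$ for $r = t, \dots, t'$. Suppose the Variable-share weight dynamics give, for each step $s \in [t, t']$, a transfer $a_s \ge \tilde w_{t-1}(p) \frac{\alpha}{N-1} \ell_s(p) e^{-\eta \sum_{r=t}^s \ell_r(p)} (1-\alpha)^{\sum_{r=t}^{s-1} \ell_r(p)}$ from expert $p$ to expert $q$, and that weights of expert $q$ decay by at most a factor $[e^{-\eta}(1-\alpha)]^{\ell}$ per unit loss $\ell$. If $\sum_{r=t}^{t'-1} \ell_r(p) < 1$ and $1 \le \sum_{r=t}^{t'} \ell_r(p) < 2$, then $\tilde w_{t'}(q) \ge \tilde w_{t-1}(p) \frac{\alpha}{N-1} e^{-\eta}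 (1-\alpha) \left[e^{-\eta}(1-\alpha)\right]^{\sum_{r=t}^{t'} \ell_r(q)}$. -/
/-!
Put `b = e^{-η}(1-α)` and let `L_s` be the cumulative loss of `p` over `[t, s]`. Since
`1 - α ≤ 1`, the transfer at step `s` is at least `w̃_{t-1}(p) α/(N-1)` times
`ℓ_s(p) b^{L_s}`, and `∑_s ℓ_s(p) b^{L_s}` is a lower Riemann sum of the decreasing
function `x ↦ b^x`.
With `C = L_{t'-1} ≤ 1` and `D = ℓ_{t'}(p)`, the steps before `t'` contribute at least
`C b^C` and the last one `D b^{C+D}`; as `C + D ≥ 1`, weighted AM–GM gives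
`b^C (C + D b^D) ≥ b`.
-/

open Finset Real

theorem Finset.sum_Icc_eq_add_sum_Ico {α M : Type*} [PartialOrder α] [LocallyFiniteOrder α]
    [AddCommMonoid M] {a b : α} (hab : a ≤ b) (f : α → M) :
    ∑ x ∈ Icc a b, f x = f b + ∑ x ∈ Ico a b, f x := by
  classical
  rw [← Ico_insert_right hab, sum_insert right_notMem_Ico]

namespace Real

theorem le_rpow_mul_add_mul_rpow {b c d : ℝ} (hb0 : 0 ≤ b) (hb1 : b ≤ 1)
    (hc0 : 0 ≤ c) (hc1 : c ≤ 1) (hd1 : d ≤ 1) (hcd : 1 ≤ c + d) :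
    b ≤ b ^ c * (c + d * b ^ d) := by
  rcases hb0.eq_or_lt with rfl | hb0
  · exact mul_nonneg (rpow_nonneg le_rfl c)
      (add_nonneg hc0 (mul_nonneg (by linarith) (rpow_nonneg le_rfl d)))
  have hamgm : b ^ (1 - c) ≤ c + (1 - c) * b := by
    simpa using geom_mean_le_arith_mean2_weighted hc0 (sub_nonneg.2 hc1) zero_le_one hb0.le
      (by ring)
  have hbd : b ≤ b ^ d := by
    simpa using rpow_le_rpow_of_exponent_ge hb0 hb1 hd1
  calc b = b ^ c * b ^ (1 - c) := by rw [← rpow_add hb0, add_sub_cancel, rpow_one]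
    _ ≤ b ^ c * (c + d * b ^ d) := by
      gcongr
      nlinarith

theorem mul_rpow_le_rpow_mul_rpow {u β x y : ℝ} (hu : 0 ≤ u) (hβ0 : 0 < β) (hβ1 : β ≤ 1)
    (hyx : y ≤ x) : (u * β) ^ x ≤ u ^ x * β ^ y := by
  rw [mul_rpow hu hβ0.le]
  exact mul_le_mul_of_nonneg_left (rpow_le_rpow_of_exponent_ge hβ0 hβ1 hyx) (rpow_nonneg hu x)

end Real

section CumulativeLoss

variable {ℓ : ℕ → ℝ} {b : ℝ} {t t' : ℕ}

theorem rpow_mul_add_le_sum_mul_rpow (hb0 : 0 < b) (hb1 : b ≤ 1) (hℓ : ∀ r, 0 ≤ ℓ r)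
    (htt' : t ≤ t') :
    b ^ (∑ r ∈ Ico t t', ℓ r) * (∑ r ∈ Ico t t', ℓ r + ℓ t' * b ^ ℓ t') ≤
      ∑ s ∈ Icc t t', ℓ s * b ^ (∑ r ∈ Icc t s, ℓ r) := by
  set C := ∑ r ∈ Ico t t', ℓ r
  have hlast : ℓ t' * b ^ (∑ r ∈ Icc t t', ℓ r) = b ^ C * (ℓ t' * b ^ ℓ t') := by
    rw [sum_Icc_eq_add_sum_Ico htt', rpow_add hb0]
    ring
  have hearly : C * b ^ C ≤ ∑ s ∈ Ico t t', ℓ s * b ^ (∑ r ∈ Icc t s, ℓ r) := by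
    rw [sum_mul]
    refine sum_le_sum fun s hs => mul_le_mul_of_nonneg_left ?_ (hℓ s)
    exact rpow_le_rpow_of_exponent_ge hb0 hb1 <|
      sum_le_sum_of_subset_of_nonneg (Icc_subset_Ico_right (mem_Ico.1 hs).2) fun r _ _ => hℓ r
  rw [sum_Icc_eq_add_sum_Ico htt', hlast]
  linarith

theorem le_sum_mul_rpow (hb0 : 0 < b) (hb1 : b ≤ 1)
    (hℓ : ∀ r, ℓ r ∈ Set.Icc (0 : ℝ) 1) (htt' : t ≤ t')
    (hbefore : ∑ r ∈ Ico t t', ℓ r ≤ 1) (hupto : 1 ≤ ∑ r ∈ Icc t t', ℓ r) :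
    b ≤ ∑ s ∈ Icc t t', ℓ s * b ^ (∑ r ∈ Icc t s, ℓ r) := by
  rw [sum_Icc_eq_add_sum_Ico htt'] at hupto
  calc b ≤ _ :=
        le_rpow_mul_add_mul_rpow hb0.le hb1 (sum_nonneg fun r _ => (hℓ r).1) hbefore (hℓ t').2
          (by linarith)
    _ ≤ _ := rpow_mul_add_le_sum_mul_rpow hb0 hb1 (fun r => (hℓ r).1) htt'

end CumulativeLoss

theorem variable_share_recovery_general (N : ℕ) (hN : 2 ≤ N) (η α : ℝ)
    (hη : 0 < η) (hα : α ∈ Set.Ioo (0:ℝ) 1)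
    (t t' : ℕ) (htt' : t ≤ t')
    (ℓp ℓq : ℕ → ℝ) (hℓp : ∀ r, ℓp r ∈ Set.Icc (0:ℝ) 1)
    (wp : ℝ) (hwp : 0 < wp)
    (a : ℕ → ℝ)
    (htransfer : ∀ s ∈ Finset.Icc t t',
      a s ≥ wp * (α / ((N : ℝ) - 1)) * ℓp s *
        Real.exp (-η * ∑ r ∈ Finset.Icc t s, ℓp r) *
        (1 - α) ^ (∑ r ∈ Finset.Ico t s, ℓp r))
    (wq : ℝ)
    (hdecay : wq ≥ (∑ s ∈ Finset.Icc t t', a s) *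
      (Real.exp (-η) * (1 - α)) ^ (∑ r ∈ Finset.Icc t t', ℓq r))
    (hsum1 : ∑ r ∈ Finset.Ico t t', ℓp r < 1)
    (hsum2 : 1 ≤ ∑ r ∈ Finset.Icc t t', ℓp r) :
    wq ≥ wp * (α / ((N : ℝ) - 1)) * Real.exp (-η) * (1 - α) *
      (Real.exp (-η) * (1 - α)) ^ (∑ r ∈ Finset.Icc t t', ℓq r) := by
  obtain ⟨hα0, hα1⟩ := hα
  set b := exp (-η) * (1 - α)
  set w := wp * (α / ((N : ℝ) - 1))
  have hw : 0 ≤ w := by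
    have : (2 : ℝ) ≤ N := by exact_mod_cast hN
    have : 0 < (N : ℝ) - 1 := by linarith
    positivity
  have hb0 : 0 < b := mul_pos (exp_pos _) (by linarith)
  have hb1 : b ≤ 1 := mul_le_one₀ (exp_le_one_iff.2 (by linarith)) (by linarith) (by linarith)
  have hstep : ∀ s ∈ Icc t t', w * (ℓp s * b ^ (∑ r ∈ Icc t s, ℓp r)) ≤ a s := by
    intro s hs
    have hfactor := mul_rpow_le_rpow_mul_rpow (exp_pos (-η)).le (sub_pos.2 hα1) (by linarith)
      (sum_le_sum_of_subset_of_nonneg Ico_subset_Icc_self fun r _ _ => (hℓp r).1 :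
        ∑ r ∈ Ico t s, ℓp r ≤ ∑ r ∈ Icc t s, ℓp r)
    rw [← exp_mul] at hfactor
    have := mul_le_mul_of_nonneg_left hfactor (mul_nonneg hw (hℓp s).1)
    linarith [htransfer s hs]
  have htotal : w * b ≤ ∑ s ∈ Icc t t', a s :=
    calc w * b ≤ w * ∑ s ∈ Icc t t', ℓp s * b ^ (∑ r ∈ Icc t s, ℓp r) :=
          mul_le_mul_of_nonneg_left (le_sum_mul_rpow hb0 hb1 hℓp htt' hsum1.le hsum2) hw
      _ ≤ _ := by rw [mul_sum]; exact sum_le_sum hstep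
  calc w * exp (-η) * (1 - α) * b ^ (∑ r ∈ Icc t t', ℓq r)
        = w * b * b ^ (∑ r ∈ Icc t t', ℓq r) := by ring
    _ ≤ (∑ s ∈ Icc t t', a s) * b ^ (∑ r ∈ Icc t t', ℓq r) := by gcongr
    _ ≤ wq := hdecay

theorem variable_share_recovery (N : ℕ) (hN : 2 ≤ N) (η α : ℝ)
    (hη : 0 < η) (hα : α ∈ Set.Ioo (0:ℝ) 1)
    (t t' : ℕ) (htt' : t ≤ t')
    (ℓp ℓq : ℕ → ℝ) (hℓp : ∀ r, ℓp r ∈ Set.Icc (0:ℝ) 1) (hℓq : ∀ r, ℓq r ∈ Set.Icc (0:ℝ) 1)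
    (wp : ℝ) (hwp : 0 < wp)
    (a : ℕ → ℝ)
    (htransfer : ∀ s ∈ Finset.Icc t t',
      a s ≥ wp * (α / ((N : ℝ) - 1)) * ℓp s *
        Real.exp (-η * ∑ r ∈ Finset.Icc t s, ℓp r) *
        (1 - α) ^ (∑ r ∈ Finset.Ico t s, ℓp r))
    (wq : ℝ)
    (hdecay : wq ≥ (∑ s ∈ Finset.Icc t t', a s) *
      (Real.exp (-η) * (1 - α)) ^ (∑ r ∈ Finset.Icc t t', ℓq r))
    (hsum1 : ∑ r ∈ Finset.Ico t t', ℓp r < 1)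
    (hsum2 : 1 ≤ ∑ r ∈ Finset.Icc t t', ℓp r)
    (hsum3 : ∑ r ∈ Finset.Icc t t', ℓp r < 2) :
    wq ≥ wp * (α / ((N : ℝ) - 1)) * Real.exp (-η) * (1 - α) *
      (Real.exp (-η) * (1 - α)) ^ (∑ r ∈ Finset.Icc t t', ℓq r) :=
  variable_share_recovery_general N hN η α hη hα t t' htt' ℓp ℓq hℓp wp hwp a htransfer wq hdecay
    hsum1 hsum2
end

section
/- Let $b = e^{-\eta}$ with $\eta > 0$, let $c = \sum_{s=t}^{t'-1} l_s$ with each $l_s \in [0,1]$ and $c < 1$, and let $d = l_{t'} \in (0,1]$ with $c + d \ge 1$. Then $\sum_{s=t}^{t'-1} l_s\, e^{-\eta c} + l_{t'} e^{-\eta(c+d)} = c b^c + d b^{c+d} = b^c(c + d b^d) \ge b = e^{-\eta}$. -/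
/-!
Since `1 ∈ [c, c + d]`, convexity of `x ↦ b ^ x` bounds `b = b ^ 1` by the chord through
`(c, b ^ c)` and `(c + d, b ^ (c + d))`. The chord value is a combination of `b ^ c` and
`b ^ (c + d)` whose weights are dominated by `c` and `d`, the surplus going to the larger
term `b ^ c` because `b ≤ 1`.
-/

namespace Real

theorem mul_le_chord_rpow {b c d : ℝ} (hb : 0 < b) (hc : c ≤ 1) (hd : 0 < d)
    (hcd : 1 ≤ c + d) :
    d * b ≤ (c + d - 1) * b ^ c + (1 - c) * b ^ (c + d) := by
  have hconv := (convexOn_rpow_left hb).2 (Set.mem_univ c) (Set.mem_univ (c + d))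
    (div_nonneg (sub_nonneg.2 hcd) hd.le) (div_nonneg (sub_nonneg.2 hc) hd.le)
    (by field_simp; ring)
  have hone : (c + d - 1) / d * c + (1 - c) / d * (c + d) = 1 := by field_simp; ring
  simp only [smul_eq_mul, hone, rpow_one] at hconv
  calc d * b ≤ d * ((c + d - 1) / d * b ^ c + (1 - c) / d * b ^ (c + d)) :=
        mul_le_mul_of_nonneg_left hconv hd.le
    _ = (c + d - 1) * b ^ c + (1 - c) * b ^ (c + d) := by field_simp

theorem le_rpow_mul_add_mul_rpow_s15 {b c d : ℝ} (hb₀ : 0 < b) (hb₁ : b ≤ 1) (hc : c < 1)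
    (hd₀ : 0 < d) (hd₁ : d ≤ 1) (hcd : 1 ≤ c + d) :
    b ≤ b ^ c * (c + d * b ^ d) := by
  have hanti : b ^ (c + d) ≤ b ^ c := rpow_le_rpow_of_exponent_ge hb₀ hb₁ (by linarith)
  have hpos : 0 < b ^ (c + d) := rpow_pos_of_pos hb₀ _
  have hchord := mul_le_chord_rpow hb₀ hc.le hd₀ hcd
  have hweights :
      (c + d - 1) * b ^ c + (1 - c) * b ^ (c + d) ≤ d * (c * b ^ c + d * b ^ (c + d)) := by
    linear_combination mul_nonneg (mul_nonneg (sub_nonneg.2 hc.le) (sub_nonneg.2 hd₁))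
      (sub_nonneg.2 hanti) + mul_nonneg (mul_nonneg hd₀.le (sub_nonneg.2 hcd)) hpos.le
  rw [mul_add, ← mul_assoc, mul_comm (b ^ c) d, mul_assoc, ← rpow_add hb₀, mul_comm (b ^ c)]
  exact le_of_mul_le_mul_left (hchord.trans hweights) hd₀

end Real

theorem lemma8_final_estimate_general (η : ℝ) (hη : 0 < η) (t t' : ℕ)
    (l : ℕ → ℝ) (hl : ∀ s, l s ∈ Set.Icc (0:ℝ) 1)
    (hc : ∑ s ∈ Finset.Ico t t', l s < 1)
    (hd : 0 < l t')
    (hcd : 1 ≤ (∑ s ∈ Finset.Ico t t', l s) + l t') :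
    ((∑ s ∈ Finset.Ico t t', l s) * Real.exp (-η * (∑ s ∈ Finset.Ico t t', l s)) +
        l t' * Real.exp (-η * ((∑ s ∈ Finset.Ico t t', l s) + l t')) =
      Real.exp (-η) ^ (∑ s ∈ Finset.Ico t t', l s) *
        ((∑ s ∈ Finset.Ico t t', l s) + l t' * Real.exp (-η) ^ (l t'))) ∧
    Real.exp (-η) ^ (∑ s ∈ Finset.Ico t t', l s) *
        ((∑ s ∈ Finset.Ico t t', l s) + l t' * Real.exp (-η) ^ (l t')) ≥
      Real.exp (-η) := by
  refine ⟨?_, Real.le_rpow_mul_add_mul_rpow_s15 (Real.exp_pos _)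
    (Real.exp_le_one_iff.2 (by linarith)) hc hd (hl t').2 hcd⟩
  rw [Real.exp_mul, Real.exp_mul, Real.rpow_add (Real.exp_pos _)]
  ring

theorem lemma8_final_estimate (η : ℝ) (hη : 0 < η) (t t' : ℕ) (htt' : t ≤ t')
    (l : ℕ → ℝ) (hl : ∀ s, l s ∈ Set.Icc (0:ℝ) 1)
    (hc : ∑ s ∈ Finset.Ico t t', l s < 1)
    (hd : 0 < l t')
    (hcd : 1 ≤ (∑ s ∈ Finset.Ico t t', l s) + l t') :
    ((∑ s ∈ Finset.Ico t t', l s) * Real.exp (-η * (∑ s ∈ Finset.Ico t t', l s)) +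
        l t' * Real.exp (-η * ((∑ s ∈ Finset.Ico t t', l s) + l t')) =
      Real.exp (-η) ^ (∑ s ∈ Finset.Ico t t', l s) *
        ((∑ s ∈ Finset.Ico t t', l s) + l t' * Real.exp (-η) ^ (l t'))) ∧
    Real.exp (-η) ^ (∑ s ∈ Finset.Ico t t', l s) *
        ((∑ s ∈ Finset.Ico t t', l s) + l t' * Real.exp (-η) ^ (l t')) ≥
      Real.exp (-η) :=
  lemma8_final_estimate_general η hη t t' l hl hc hd hcd
end

section
/- (Variable-share regret under delayed feedback.) With $N \ge 2$ experts, average losses $\ell_t(i) \in [0,1]$, $\eta > 0$, $\alpha \in (0,1)$, initial weights $\tilde w_0(i) = 1/N$, intermediate update $w_t(i) = \tilde w_{t-1}(i) e^{-\eta \ell_t(i)}$, and Variable-share update $\tilde w_t(i) = (1-\alpha)^{\ell_t(i)} w_t(i) + \frac{1}{N-1}\sum_{j\ne i}\left(1-(1-\alpha)^{\ell_t(j)}\right) w_t(j)$, suppose the learner's average loss satisfies $\sum_{t=1}^T \ell_t^{\gamma} \le -\frac{C}{\eta} \ln \tilde w_T(i)$ for all $i$, where $C > 0$. Then for any superexpert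 with switch times $1 = t_0 < \dots < t_{k+1} = T+1$ and experts $e_0,\dots,e_k$ ($e_j \ne e_{j+1}$), whose total average loss is $L = \sum_{j=0}^k \sum_{t=t_j}^{t_{j+1}-1} \ell_t(e_j)$, it holds that $\sum_{t=1}^T \ell_t^{\gamma} \le C\left(1 + \frac{1}{\eta}\ln\frac{1}{1-\alpha}\right) L + \frac{C}{\eta}\left(\ln N + k\left(\eta + \ln\frac{N-1}{\alpha(1-\alpha)}\right)\right)$. -/
/-!
Write `a = -log (1 - α)` and `b = η + a`, so that `(1 - α) ^ ℓ = exp (-a ℓ)`. Over a stretch of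
rounds on which an expert has loss `L`, its weight shrinks at most by the factor `exp (-b L)`
(collapse). At a switch to `e_{j+1}`, let `f` be the expert currently carrying the lower bound.
If `f = e_{j+1}`, collapse suffices. If `f` loses at least one unit during the new segment, the
mass it shares telescopes to at least `exp (-b) α / (N - 1)` times its weight, and this mass
reaches `e_{j+1}` (recovery); otherwise `f` itself keeps at least `exp (-b)` of its weight. Either
way some expert ends with weight at least `(1 / N) exp (-b (L + k)) (α / (N - 1)) ^ k`, and the
mixability bound applied to that expert is the claim.
-/

open Real Finset

theorem exp_mul_le_one_sub_add_mul_exp (c : ℝ) {l : ℝ} (h0 : 0 ≤ l) (h1 : l ≤ 1) :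
    exp (l * c) ≤ 1 - l + l * exp c := by
  simpa using convexOn_exp.2 (Set.mem_univ 0) (Set.mem_univ c) (sub_nonneg.2 h1) h0 (by ring)

theorem one_sub_exp_neg_nonneg {x : ℝ} (hx : 0 ≤ x) : 0 ≤ 1 - exp (-x) :=
  sub_nonneg.2 (exp_le_one_iff.2 (neg_nonpos.2 hx))

theorem exp_neg_mul_one_sub_exp_le {η a g : ℝ} (hη : 0 ≤ η) (ha : 0 ≤ a) (h0 : 0 ≤ g)
    (h1 : g ≤ 1) :
    exp (-(η + a)) * (1 - exp (-a)) * (1 - exp (-((η + a) * g))) ≤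
      (1 - exp (-(η + a))) * ((1 - exp (-(a * g))) * exp (-(η * g))) := by
  set b := η + a
  have hshare : g * (1 - exp (-a)) ≤ 1 - exp (-(a * g)) := by
    have := exp_mul_le_one_sub_add_mul_exp (-a) h0 h1
    rw [mul_neg, mul_comm] at this
    linarith
  have hdecay : exp (-(b * g)) ≤ exp (-(η * g)) := exp_le_exp.2 (by nlinarith)
  -- the chord of `exp` on `[0, b]`, multiplied through by `exp (-b) * exp (-(b * g))`
  have hgrowth : exp (-b) * (1 - exp (-(b * g))) ≤ g * exp (-(b * g)) * (1 - exp (-b)) := by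
    have hchord := exp_mul_le_one_sub_add_mul_exp b h0 h1
    have e1 : exp (g * b) * exp (-(b * g)) = 1 := by rw [← exp_add]; ring_nf; exact exp_zero
    have e2 : exp b * exp (-b) = 1 := by rw [← exp_add]; ring_nf; exact exp_zero
    linear_combination (exp (-b) * exp (-(b * g))) * hchord - exp (-b) * e1
      + g * exp (-(b * g)) * e2
  have hb1 : 0 ≤ 1 - exp (-b) := one_sub_exp_neg_nonneg (add_nonneg hη ha)
  have ha1 : 0 ≤ 1 - exp (-a) := one_sub_exp_neg_nonneg ha
  have hag : 0 ≤ 1 - exp (-(a * g)) := one_sub_exp_neg_nonneg (mul_nonneg ha h0)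
  calc exp (-b) * (1 - exp (-a)) * (1 - exp (-(b * g)))
      = exp (-b) * (1 - exp (-(b * g))) * (1 - exp (-a)) := by ring
    _ ≤ g * exp (-(b * g)) * (1 - exp (-b)) * (1 - exp (-a)) := by gcongr
    _ = (1 - exp (-b)) * (g * (1 - exp (-a)) * exp (-(b * g))) := by ring
    _ ≤ (1 - exp (-b)) * ((1 - exp (-(a * g))) * exp (-(η * g))) := by gcongr

theorem exp_neg_mul_one_sub_exp_le_sum {η a : ℝ} (hη : 0 ≤ η) (ha : 0 ≤ a) (hb : 0 < η + a)
    {g : ℕ → ℝ} (hg0 : ∀ r, 0 ≤ g r) (hg1 : ∀ r, g r ≤ 1) {d : ℕ}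
    (hd : 1 ≤ ∑ r ∈ range d, g r) :
    exp (-(η + a)) * (1 - exp (-a)) ≤
      ∑ r ∈ range d, exp (-((η + a) * ∑ m ∈ range r, g m)) *
        ((1 - exp (-(a * g r))) * exp (-(η * g r))) := by
  set b := η + a
  set q : ℕ → ℝ := fun r ↦ ∑ m ∈ range r, g m
  have hb1 : 0 < 1 - exp (-b) := sub_pos.2 (exp_lt_one_iff.2 (neg_lt_zero.2 hb))
  have ha1 : 0 ≤ 1 - exp (-a) := one_sub_exp_neg_nonneg ha
  refine le_of_mul_le_mul_left ?_ hb1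
  -- the mass `exp (-(b * q r))` telescopes, and `q d ≥ 1` bounds what is left of it
  calc (1 - exp (-b)) * (exp (-b) * (1 - exp (-a)))
      ≤ exp (-b) * (1 - exp (-a)) * (exp (-(b * q 0)) - exp (-(b * q d))) := by
        have hqd : exp (-(b * q d)) ≤ exp (-b) := exp_le_exp.2 (by nlinarith)
        rw [show q 0 = 0 from sum_range_zero g, mul_zero, neg_zero, exp_zero, mul_comm]
        gcongr
    _ = ∑ r ∈ range d, exp (-(b * q r)) *
          (exp (-b) * (1 - exp (-a)) * (1 - exp (-(b * g r)))) := by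
        rw [← sum_range_sub' fun r ↦ exp (-(b * q r)), mul_sum]
        refine sum_congr rfl fun r _ ↦ ?_
        rw [show q (r + 1) = q r + g r from sum_range_succ g r, mul_add,
          show -(b * q r + b * g r) = -(b * q r) + -(b * g r) by ring, exp_add]
        ring
    _ ≤ ∑ r ∈ range d, exp (-(b * q r)) *
          ((1 - exp (-b)) * ((1 - exp (-(a * g r))) * exp (-(η * g r)))) := by
        refine sum_le_sum fun r _ ↦ mul_le_mul_of_nonneg_left ?_ (exp_pos _).le
        exact exp_neg_mul_one_sub_exp_le hη ha (hg0 r) (hg1 r)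
    _ = (1 - exp (-b)) * ∑ r ∈ range d, exp (-(b * q r)) *
          ((1 - exp (-(a * g r))) * exp (-(η * g r))) := by
        rw [mul_sum]; exact sum_congr rfl fun r _ ↦ by ring

section VariableShare

variable {ι : Type*} [Fintype ι] [DecidableEq ι]

/-- One round of Variable-share: `v j * exp (-(η * l j))` is the intermediate weight `w_t(j)`,
and `exp (-(a * l))` stands for `(1 - α) ^ l` with `a = -log (1 - α)`. -/
noncomputable def variableShareStep (η a c : ℝ) (l v : ι → ℝ) (i : ι) : ℝ :=
  exp (-(a * l i)) * (v i * exp (-(η * l i))) +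
    c * ∑ j ∈ univ \ {i}, (1 - exp (-(a * l j))) * (v j * exp (-(η * l j)))

theorem variableShareStep_eq (η a c : ℝ) (l v : ι → ℝ) (i : ι) :
    variableShareStep η a c l v i = exp (-((η + a) * l i)) * v i +
      c * ∑ j ∈ univ \ {i}, (1 - exp (-(a * l j))) * (v j * exp (-(η * l j))) := by
  rw [variableShareStep, add_mul, neg_add, exp_add]
  ring

theorem exp_mul_add_share_le_variableShareStep {η a c : ℝ} (ha : 0 ≤ a) (hc : 0 ≤ c)
    {l v : ι → ℝ} (hl : ∀ j, 0 ≤ l j) (hv : ∀ j, 0 ≤ v j) {f i : ι} (hfi : f ≠ i) :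
    exp (-((η + a) * l i)) * v i + c * ((1 - exp (-(a * l f))) * (v f * exp (-(η * l f)))) ≤
      variableShareStep η a c l v i := by
  rw [variableShareStep_eq]
  refine add_le_add_right (mul_le_mul_of_nonneg_left ?_ hc) _
  refine single_le_sum (f := fun j ↦ (1 - exp (-(a * l j))) * (v j * exp (-(η * l j))))
    (fun j _ ↦ ?_) (by simpa using hfi)
  exact mul_nonneg (one_sub_exp_neg_nonneg (mul_nonneg ha (hl j)))
    (mul_nonneg (hv j) (exp_pos _).le)

theorem exp_mul_le_variableShareStep {η a c : ℝ} (ha : 0 ≤ a) (hc : 0 ≤ c) {l v : ι → ℝ}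
    (hl : ∀ j, 0 ≤ l j) (hv : ∀ j, 0 ≤ v j) (i : ι) :
    exp (-((η + a) * l i)) * v i ≤ variableShareStep η a c l v i := by
  rw [variableShareStep_eq]
  refine le_add_of_nonneg_right (mul_nonneg hc (sum_nonneg fun j _ ↦ ?_))
  exact mul_nonneg (one_sub_exp_neg_nonneg (mul_nonneg ha (hl j)))
    (mul_nonneg (hv j) (exp_pos _).le)

/-- `W t` are the weights `w̃_t` of a Variable-share run on the losses `ℓ t` of round `t ≥ 1`. -/
structure IsVariableShareRun (η a c : ℝ) (ℓ W : ℕ → ι → ℝ) : Prop where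
  nonneg_η : 0 ≤ η
  nonneg_a : 0 ≤ a
  nonneg_c : 0 ≤ c
  loss_nonneg : ∀ t i, 0 ≤ ℓ t i
  weight_zero_nonneg : ∀ i, 0 ≤ W 0 i
  weight_succ : ∀ t, W (t + 1) = variableShareStep η a c (ℓ (t + 1)) (W t)

namespace IsVariableShareRun

variable {η a c : ℝ} {ℓ W : ℕ → ι → ℝ}

theorem weight_nonneg (h : IsVariableShareRun η a c ℓ W) (t : ℕ) (i : ι) : 0 ≤ W t i := by
  induction t generalizing i with
  | zero => exact h.weight_zero_nonneg i
  | succ t ih =>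
    rw [h.weight_succ]
    exact (mul_nonneg (exp_pos _).le (ih i)).trans
      (exp_mul_le_variableShareStep h.nonneg_a h.nonneg_c (h.loss_nonneg _) ih i)

theorem collapse (h : IsVariableShareRun η a c ℓ W) (u : ℕ) (i : ι) (d : ℕ) :
    exp (-((η + a) * ∑ r ∈ range d, ℓ (u + 1 + r) i)) * W u i ≤ W (u + d) i := by
  induction d with
  | zero => simp
  | succ d ih =>
    calc exp (-((η + a) * ∑ r ∈ range (d + 1), ℓ (u + 1 + r) i)) * W u i
        = exp (-((η + a) * ℓ (u + d + 1) i)) *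
            (exp (-((η + a) * ∑ r ∈ range d, ℓ (u + 1 + r) i)) * W u i) := by
          rw [sum_range_succ, show u + 1 + d = u + d + 1 by omega, mul_add, neg_add, exp_add]
          ring
      _ ≤ exp (-((η + a) * ℓ (u + d + 1) i)) * W (u + d) i := by gcongr
      _ ≤ W (u + d + 1) i := by
          rw [h.weight_succ]
          exact exp_mul_le_variableShareStep h.nonneg_a h.nonneg_c (h.loss_nonneg _)
            (h.weight_nonneg _) i

theorem recovery_sum (h : IsVariableShareRun η a c ℓ W) (u : ℕ) {f i : ι} (hfi : f ≠ i)
    (d : ℕ) :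
    exp (-((η + a) * ∑ r ∈ range d, ℓ (u + 1 + r) i)) *
      (c * (∑ r ∈ range d, exp (-((η + a) * ∑ m ∈ range r, ℓ (u + 1 + m) f)) *
        ((1 - exp (-(a * ℓ (u + 1 + r) f))) * exp (-(η * ℓ (u + 1 + r) f)))) * W u f) ≤
      W (u + d) i := by
  induction d with
  | zero => simpa using h.weight_nonneg u i
  | succ d ih =>
    set R := ∑ r ∈ range d, ℓ (u + 1 + r) i
    set Q := ∑ m ∈ range d, ℓ (u + 1 + m) f
    set l := ℓ (u + d + 1)
    have hR : 0 ≤ R := sum_nonneg fun r _ ↦ h.loss_nonneg _ _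
    have hshare : 0 ≤ 1 - exp (-(a * l f)) := one_sub_exp_neg_nonneg
      (mul_nonneg h.nonneg_a (h.loss_nonneg _ _))
    have hdecay : exp (-((η + a) * (R + l i))) ≤ 1 :=
      exp_le_one_iff.2 (neg_nonpos.2 (mul_nonneg (add_nonneg h.nonneg_η h.nonneg_a)
        (add_nonneg hR (h.loss_nonneg _ _))))
    rw [sum_range_succ, sum_range_succ, show u + 1 + d = u + d + 1 by omega]
    calc exp (-((η + a) * (R + l i))) * (c * (∑ r ∈ range d,
            exp (-((η + a) * ∑ m ∈ range r, ℓ (u + 1 + m) f)) *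
              ((1 - exp (-(a * ℓ (u + 1 + r) f))) * exp (-(η * ℓ (u + 1 + r) f))) +
            exp (-((η + a) * Q)) * ((1 - exp (-(a * l f))) * exp (-(η * l f)))) * W u f)
        = exp (-((η + a) * l i)) * (exp (-((η + a) * R)) * (c * (∑ r ∈ range d,
            exp (-((η + a) * ∑ m ∈ range r, ℓ (u + 1 + m) f)) *
              ((1 - exp (-(a * ℓ (u + 1 + r) f))) * exp (-(η * ℓ (u + 1 + r) f)))) * W u f)) +
          exp (-((η + a) * (R + l i))) *
            (c * ((1 - exp (-(a * l f))) *
              (exp (-((η + a) * Q)) * W u f * exp (-(η * l f))))) := by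
          rw [mul_add, neg_add, exp_add]; ring
      _ ≤ exp (-((η + a) * l i)) * W (u + d) i +
            c * ((1 - exp (-(a * l f))) * (W (u + d) f * exp (-(η * l f)))) := by
          refine add_le_add (by gcongr) ((mul_le_of_le_one_left ?_ hdecay).trans ?_)
          · exact mul_nonneg h.nonneg_c (mul_nonneg hshare (mul_nonneg (mul_nonneg (exp_pos _).le
              (h.weight_nonneg u f)) (exp_pos _).le))
          · exact mul_le_mul_of_nonneg_left (mul_le_mul_of_nonneg_left
              (mul_le_mul_of_nonneg_right (h.collapse u f d) (exp_pos _).le) hshare) h.nonneg_c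
      _ ≤ W (u + d + 1) i := by
          rw [h.weight_succ]
          exact exp_mul_add_share_le_variableShareStep h.nonneg_a h.nonneg_c (h.loss_nonneg _)
            (h.weight_nonneg _) hfi

theorem recovery (h : IsVariableShareRun η a c ℓ W) (hb : 0 < η + a)
    (hℓ1 : ∀ t i, ℓ t i ≤ 1) (u : ℕ) {f i : ι} (hfi : f ≠ i) {d : ℕ}
    (hf : 1 ≤ ∑ r ∈ range d, ℓ (u + 1 + r) f) :
    exp (-((η + a) * ∑ r ∈ range d, ℓ (u + 1 + r) i)) *
      (c * (exp (-(η + a)) * (1 - exp (-a))) * W u f) ≤ W (u + d) i := by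
  refine le_trans ?_ (h.recovery_sum u hfi d)
  gcongr
  · exact h.weight_nonneg u f
  · exact h.nonneg_c
  · exact exp_neg_mul_one_sub_exp_le_sum h.nonneg_η h.nonneg_a hb
      (fun r ↦ h.loss_nonneg _ _) (fun r ↦ hℓ1 _ _) hf

theorem exists_le_weight_add (h : IsVariableShareRun η a c ℓ W) (hb : 0 < η + a)
    (hℓ1 : ∀ t i, ℓ t i ≤ 1) (hκ : c * (1 - exp (-a)) ≤ 1) {B : ℝ} (hB : 0 ≤ B) {u : ℕ}
    {f : ι} (hf : B ≤ W u f) (d : ℕ) (i : ι) :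
    ∃ f', B * (exp (-((η + a) * (∑ r ∈ range d, ℓ (u + 1 + r) i + 1))) * (c * (1 - exp (-a))))
      ≤ W (u + d) f' := by
  set b := η + a
  set ρ := ∑ r ∈ range d, ℓ (u + 1 + r) i
  set κ := c * (1 - exp (-a))
  have ha1 : 0 ≤ 1 - exp (-a) := one_sub_exp_neg_nonneg h.nonneg_a
  have hκ0 : 0 ≤ κ := mul_nonneg h.nonneg_c ha1
  have hρ : exp (-(b * ρ)) ≤ 1 :=
    exp_le_one_iff.2 (neg_nonpos.2 (mul_nonneg hb.le (sum_nonneg fun r _ ↦ h.loss_nonneg _ _)))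
  have hb1 : exp (-b) ≤ 1 := exp_le_one_iff.2 (neg_nonpos.2 hb.le)
  have hsplit : exp (-(b * (ρ + 1))) = exp (-(b * ρ)) * exp (-b) := by
    rw [← exp_add]; ring_nf
  rw [hsplit]
  by_cases hfi : f = i
  · subst hfi
    refine ⟨f, le_trans ?_ (h.collapse u f d)⟩
    calc B * (exp (-(b * ρ)) * exp (-b) * κ) ≤ B * (exp (-(b * ρ)) * 1 * 1) := by
          gcongr
      _ ≤ exp (-(b * ρ)) * W u f := by nlinarith [exp_pos (-(b * ρ))]
  by_cases hQ : 1 ≤ ∑ r ∈ range d, ℓ (u + 1 + r) f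
  · refine ⟨i, le_trans ?_ (h.recovery hb hℓ1 u hfi hQ)⟩
    calc B * (exp (-(b * ρ)) * exp (-b) * κ)
        = exp (-(b * ρ)) * (c * (exp (-b) * (1 - exp (-a))) * B) := by ring
      _ ≤ _ := mul_le_mul_of_nonneg_left (mul_le_mul_of_nonneg_left hf
          (mul_nonneg h.nonneg_c (mul_nonneg (exp_pos _).le ha1))) (exp_pos _).le
  · refine ⟨f, le_trans ?_ (h.collapse u f d)⟩
    have hQ' : exp (-b) ≤ exp (-(b * ∑ r ∈ range d, ℓ (u + 1 + r) f)) :=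
      exp_le_exp.2 (by nlinarith)
    calc B * (exp (-(b * ρ)) * exp (-b) * κ) ≤ B * (1 * exp (-b) * 1) := by gcongr
      _ ≤ _ := by nlinarith [exp_pos (-b)]

theorem exists_le_weight_segments (h : IsVariableShareRun η a c ℓ W) (hb : 0 < η + a)
    (hℓ1 : ∀ t i, ℓ t i ≤ 1) (hκ : c * (1 - exp (-a)) ≤ 1) {k : ℕ} {tseq : ℕ → ℕ}
    (ht0 : tseq 0 = 1) (hmono : ∀ j, j ≤ k → tseq j ≤ tseq (j + 1)) (e : ℕ → ι) {j : ℕ}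
    (hj : j ≤ k) :
    ∃ f, W 0 (e 0) * exp (-((η + a) * (∑ m ∈ range (j + 1),
        ∑ t ∈ Ico (tseq m) (tseq (m + 1)), ℓ t (e m) + j))) * (c * (1 - exp (-a))) ^ j ≤
      W (tseq (j + 1) - 1) f := by
  have hκ0 : 0 ≤ c * (1 - exp (-a)) := mul_nonneg h.nonneg_c
    (one_sub_exp_neg_nonneg h.nonneg_a)
  have hsegment : ∀ m ≤ k, ∃ u d, tseq m = u + 1 ∧ tseq (m + 1) = u + 1 + d := fun m hm ↦ by
    have : 1 ≤ tseq m := by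
      induction m with
      | zero => omega
      | succ m ih => exact (ih (by omega)).trans (hmono m (by omega))
    exact ⟨tseq m - 1, tseq (m + 1) - tseq m, by omega, by have := hmono m hm; omega⟩
  induction j with
  | zero =>
    obtain ⟨u, d, hu, hd⟩ := hsegment 0 hj
    obtain rfl : u = 0 := by omega
    refine ⟨e 0, ?_⟩
    simpa [hu, hd, sum_Ico_eq_sum_range, mul_comm] using h.collapse 0 (e 0) d
  | succ j ih =>
    obtain ⟨f, hf⟩ := ih (by omega)
    obtain ⟨u, d, hu, hd⟩ := hsegment (j + 1) hj
    rw [hu, Nat.add_sub_cancel] at hf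
    obtain ⟨f', hf'⟩ := h.exists_le_weight_add hb hℓ1 hκ (mul_nonneg (mul_nonneg
      (h.weight_nonneg 0 _) (exp_pos _).le) (pow_nonneg hκ0 _)) hf d (e (j + 1))
    rw [hd, show u + 1 + d - 1 = u + d by omega]
    refine ⟨f', le_of_eq_of_le ?_ hf'⟩
    rw [sum_range_succ _ (j + 1), hu, hd,
      sum_Ico_eq_sum_range, show u + 1 + d - (u + 1) = d by omega]
    push_cast
    rw [show ∀ x y z : ℝ, -((η + a) * (x + y + (z + 1))) =
      -((η + a) * (x + z)) + -((η + a) * (y + 1)) by intros; ring, exp_add]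
    ring

end IsVariableShareRun

end VariableShare

theorem isVariableShareRun_of_update {ι : Type*} [Fintype ι] [DecidableEq ι] {η α c : ℝ}
    (hη : 0 ≤ η) (hα0 : 0 ≤ α) (hα1 : α < 1) (hc : 0 ≤ c) {ℓ w W : ℕ → ι → ℝ}
    (hℓ : ∀ t i, 0 ≤ ℓ t i) (h0 : ∀ i, 0 ≤ W 0 i)
    (hw : ∀ t, 1 ≤ t → ∀ i, w t i = W (t - 1) i * exp (-η * ℓ t i))
    (hW : ∀ t, 1 ≤ t → ∀ i, W t i = (1 - α) ^ (ℓ t i) * w t i +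
      c * ∑ j ∈ univ \ {i}, (1 - (1 - α) ^ (ℓ t j)) * w t j) :
    IsVariableShareRun η (-log (1 - α)) c ℓ W where
  nonneg_η := hη
  nonneg_a := neg_nonneg.2 (log_nonpos (by linarith) (by linarith))
  nonneg_c := hc
  loss_nonneg := hℓ
  weight_zero_nonneg := h0
  weight_succ t := by
    have hpow (l : ℝ) : (1 - α) ^ l = exp (-(-log (1 - α) * l)) := by
      rw [rpow_def_of_pos (by linarith)]; ring_nf
    ext i
    simp only [variableShareStep, hW (t + 1) (by omega), hw (t + 1) (by omega), hpow,
      Nat.add_sub_cancel, neg_mul]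

theorem variable_share_regret_general (N T k : ℕ) (hN : 2 ≤ N) (η α C : ℝ)
    (hη : 0 < η) (hα : α ∈ Set.Ioo (0:ℝ) 1) (hC : 0 < C)
    (ℓ : ℕ → Fin N → ℝ) (hℓ : ∀ t i, ℓ t i ∈ Set.Icc (0:ℝ) 1)
    (w wt : ℕ → Fin N → ℝ)
    (hinit : ∀ i, wt 0 i = 1 / N)
    (hw : ∀ t, 1 ≤ t → ∀ i, w t i = wt (t - 1) i * Real.exp (-η * ℓ t i))
    (hwt : ∀ t, 1 ≤ t → ∀ i,
      wt t i = (1 - α) ^ (ℓ t i) * w t i +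
        (1 / ((N : ℝ) - 1)) * ∑ j ∈ Finset.univ \ {i}, (1 - (1 - α) ^ (ℓ t j)) * w t j)
    (ℓγ : ℕ → ℝ)
    (hlearner : ∀ i, ∑ t ∈ Finset.Icc 1 T, ℓγ t ≤ -(C / η) * Real.log (wt T i))
    (tseq : ℕ → ℕ) (e : ℕ → Fin N)
    (ht0 : tseq 0 = 1) (htk : tseq (k + 1) = T + 1)
    (hmono : ∀ j, j ≤ k → tseq j < tseq (j + 1)) :
    ∑ t ∈ Finset.Icc 1 T, ℓγ t ≤
      C * (1 + (1 / η) * Real.log (1 / (1 - α))) *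
        (∑ j ∈ Finset.range (k + 1), ∑ t ∈ Finset.Ico (tseq j) (tseq (j + 1)), ℓ t (e j)) +
      (C / η) * (Real.log N + k * (η + Real.log (((N : ℝ) - 1) / (α * (1 - α))))) := by
  obtain ⟨hα0, hα1⟩ := hα
  have hN1 : (1 : ℝ) ≤ N - 1 := by
    have : (2 : ℝ) ≤ N := by exact_mod_cast hN
    linarith
  set a := -log (1 - α)
  have hshare : 1 - exp (-a) = α := by rw [neg_neg, exp_log (by linarith)]; ring
  have hrun := isVariableShareRun_of_update hη.le hα0.le hα1 (by positivity)
    (fun t i ↦ (hℓ t i).1) (fun i ↦ by rw [hinit]; positivity) hw hwt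
  obtain ⟨f, hf⟩ := hrun.exists_le_weight_segments (add_pos_of_pos_of_nonneg hη hrun.nonneg_a)
    (fun t i ↦ (hℓ t i).2)
    (by rw [hshare, one_div_mul_eq_div, div_le_one (by positivity)]; linarith) ht0
    (fun j hj ↦ (hmono j hj).le) e le_rfl
  rw [hinit, hshare, htk, Nat.add_sub_cancel] at hf
  calc _ ≤ -(C / η) * log (wt T f) := hlearner f
    _ ≤ -(C / η) * log (1 / N * exp (-((η + a) * (∑ j ∈ range (k + 1),
          ∑ t ∈ Ico (tseq j) (tseq (j + 1)), ℓ t (e j) + k))) * (1 / (N - 1) * α) ^ k) := by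
        refine mul_le_mul_of_nonpos_left (log_le_log (by positivity) hf) ?_
        exact neg_nonpos.2 (by positivity)
    _ = _ := by
        simp only [one_div]
        rw [log_mul (by positivity) (by positivity), log_mul (by positivity) (by positivity),
          log_exp, log_pow, log_mul (by positivity) hα0.ne', log_inv, log_inv, log_inv,
          log_div (by linarith) (by positivity), log_mul hα0.ne' (by linarith)]
        field_simp
        ring

theorem variable_share_regret (N T k : ℕ) (hN : 2 ≤ N) (η α C : ℝ)
    (hη : 0 < η) (hα : α ∈ Set.Ioo (0:ℝ) 1) (hC : 0 < C)
    (ℓ : ℕ → Fin N → ℝ) (hℓ : ∀ t i, ℓ t i ∈ Set.Icc (0:ℝ) 1)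
    (w wt : ℕ → Fin N → ℝ)
    (hinit : ∀ i, wt 0 i = 1 / N)
    (hw : ∀ t, 1 ≤ t → ∀ i, w t i = wt (t - 1) i * Real.exp (-η * ℓ t i))
    (hwt : ∀ t, 1 ≤ t → ∀ i,
      wt t i = (1 - α) ^ (ℓ t i) * w t i +
        (1 / ((N : ℝ) - 1)) * ∑ j ∈ Finset.univ \ {i}, (1 - (1 - α) ^ (ℓ t j)) * w t j)
    (ℓγ : ℕ → ℝ)
    (hlearner : ∀ i, ∑ t ∈ Finset.Icc 1 T, ℓγ t ≤ -(C / η) * Real.log (wt T i))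
    (tseq : ℕ → ℕ) (e : ℕ → Fin N)
    (ht0 : tseq 0 = 1) (htk : tseq (k + 1) = T + 1)
    (hmono : ∀ j, j ≤ k → tseq j < tseq (j + 1))
    (he : ∀ j, j < k → e j ≠ e (j + 1)) :
    ∑ t ∈ Finset.Icc 1 T, ℓγ t ≤
      C * (1 + (1 / η) * Real.log (1 / (1 - α))) *
        (∑ j ∈ Finset.range (k + 1), ∑ t ∈ Finset.Ico (tseq j) (tseq (j + 1)), ℓ t (e j)) +
      (C / η) * (Real.log N + k * (η + Real.log (((N : ℝ) - 1) / (α * (1 - α))))) :=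
  variable_share_regret_general N T k hN η α C hη hα hC ℓ hℓ w wt hinit hw hwt ℓγ hlearner tseq e
    ht0 htk hmono
end

section
/- Let $\hat L > 0$, $\hat k > 0$, and $\hat\alpha = \hat k/(2\hat k + \hat L)$. If $\hat k \le \hat L$, then for any $L \le \hat L$ and $k \ge 0$: $L \ln\frac{1}{1-\hat\alpha} + k \ln\frac{1}{\hat\alpha(1-\hat\alpha)} \le \hat k + k\ln\frac{9}{2} + k \ln\frac{\hat L}{\hat k}$. -/
/-!
With $\hat\alpha = \hat k/(2\hat k + \hat L)$ one has $1/(1-\hat\alpha) = 1 + \hat k/(\hat k + \hat L)$, so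
$\ln(1+x) \le x$ bounds the first term by $\hat L \hat k/(\hat k + \hat L) \le \hat k$. For the second term,
$1/(\hat\alpha(1-\hat\alpha)) = \frac{(2\hat k+\hat L)^2}{(\hat k+\hat L)\hat L} \cdot \frac{\hat L}{\hat k}$, and the
first factor is at most $9/2$ once $\hat k \le \hat L$.
-/

open Real

section ShareRate

variable {k L : ℝ}

lemma one_sub_div_two_mul_add (hk : 0 < k) (hL : 0 < L) :
    1 - k / (2 * k + L) = (k + L) / (2 * k + L) := by
  field_simp
  ring

lemma one_div_one_sub_div_two_mul_add (hk : 0 < k) (hL : 0 < L) :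
    1 / (1 - k / (2 * k + L)) = 1 + k / (k + L) := by
  rw [one_sub_div_two_mul_add hk hL]
  field_simp
  ring

lemma one_div_div_mul_one_sub_div_two_mul_add (hk : 0 < k) (hL : 0 < L) :
    1 / (k / (2 * k + L) * (1 - k / (2 * k + L))) = (2 * k + L) ^ 2 / ((k + L) * k) := by
  rw [one_sub_div_two_mul_add hk hL]
  field_simp

lemma mul_log_one_add_div_add_le (hk : 0 ≤ k) (hL : 0 ≤ L) (hkL : 0 < k + L) :
    L * log (1 + k / (k + L)) ≤ k := by
  have hlog : log (1 + k / (k + L)) ≤ k / (k + L) := by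
    simpa using log_le_sub_one_of_pos (by positivity : 0 < 1 + k / (k + L))
  calc L * log (1 + k / (k + L)) ≤ L * (k / (k + L)) := mul_le_mul_of_nonneg_left hlog hL
    _ ≤ k := by
      rw [mul_div_assoc', div_le_iff₀ hkL]
      nlinarith

lemma sq_two_mul_add_div_le (hk : 0 < k) (hkL : k ≤ L) :
    (2 * k + L) ^ 2 / ((k + L) * k) ≤ 9 / 2 * (L / k) := by
  have hL : 0 < L := hk.trans_le hkL
  -- `9/2 (k + L) L - (2k + L)^2 = (L - k)(7L/2 + 4k)`
  have hsq : (2 * k + L) ^ 2 ≤ 9 / 2 * ((k + L) * L) := by nlinarith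
  rw [div_le_iff₀ (by positivity)]
  calc (2 * k + L) ^ 2 ≤ 9 / 2 * ((k + L) * L) := hsq
    _ = 9 / 2 * (L / k) * ((k + L) * k) := by field_simp

end ShareRate

theorem corollary_vs_case_k_le_L (Lhat khat : ℝ) (hL : 0 < Lhat) (hk : 0 < khat)
    (hkL : khat ≤ Lhat) (L k : ℝ) (hLle : L ≤ Lhat) (hk0 : 0 ≤ k) :
    L * Real.log (1 / (1 - khat / (2 * khat + Lhat))) +
        k * Real.log (1 / ((khat / (2 * khat + Lhat)) * (1 - khat / (2 * khat + Lhat)))) ≤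
      khat + k * Real.log (9 / 2) + k * Real.log (Lhat / khat) := by
  rw [one_div_one_sub_div_two_mul_add hk hL, one_div_div_mul_one_sub_div_two_mul_add hk hL]
  have hfirst : L * log (1 + khat / (khat + Lhat)) ≤ khat :=
    (mul_le_mul_of_nonneg_right hLle (log_nonneg (le_add_of_nonneg_right (by positivity)))).trans
      (mul_log_one_add_div_add_le hk.le hL.le (by positivity))
  have hsecond : log ((2 * khat + Lhat) ^ 2 / ((khat + Lhat) * khat)) ≤
      log (9 / 2) + log (Lhat / khat) := by
    rw [← log_mul (by norm_num) (by positivity)]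
    exact log_le_log (by positivity) (sq_two_mul_add_div_le hk hkL)
  linarith [mul_le_mul_of_nonneg_left hsecond hk0]
end

section
/- Let $\hat L > 0$, $\hat k > 0$, and $\hat\alpha = \hat k/(2\hat k + \hat L)$. If $\hat k \ge \hat L$, then for any $L \le \hat L$ and $k \ge 0$: $L \ln\frac{1}{1-\hat\alpha} + k \ln\frac{1}{\hat\alpha(1-\hat\alpha)} \le \frac{1}{2}\hat k + k \ln\frac{9}{2}$. -/
/-!
Both terms are controlled through `α = k̂/(2k̂ + L̂)`, which lies in `[1/3, 1/2]` because
`L̂ ≤ k̂`. From `log x ≤ x - 1` we get `log (1/(1-α)) ≤ α/(1-α) = k̂/(k̂ + L̂)`, and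
`L̂ k̂/(k̂ + L̂) ≤ k̂/2` again by `L̂ ≤ k̂`. On `[1/3, 2/3]` the product `α(1-α)` is at least `2/9`.
-/

open Real

lemma log_one_div_one_sub_le {α : ℝ} (h : α < 1) : log (1 / (1 - α)) ≤ α / (1 - α) := by
  have hpos : 0 < 1 - α := by linarith
  calc log (1 / (1 - α)) ≤ 1 / (1 - α) - 1 := log_le_sub_one_of_pos (by positivity)
    _ = α / (1 - α) := by field_simp; ring

lemma two_ninths_le_mul_one_sub {α : ℝ} (h₁ : 1 / 3 ≤ α) (h₂ : α ≤ 2 / 3) :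
    2 / 9 ≤ α * (1 - α) := by
  nlinarith

lemma log_one_div_mul_one_sub_le {α : ℝ} (h₁ : 1 / 3 ≤ α) (h₂ : α ≤ 2 / 3) :
    log (1 / (α * (1 - α))) ≤ log (9 / 2) := by
  have hprod := two_ninths_le_mul_one_sub h₁ h₂
  apply log_le_log (by positivity)
  rw [div_le_iff₀ (by linarith)]
  linarith

lemma mul_div_add_le_half {L k : ℝ} (hL : 0 < L) (hLk : L ≤ k) : L * (k / (k + L)) ≤ k / 2 := by
  rw [← mul_div_assoc, div_le_iff₀ (by linarith)]
  nlinarith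

theorem corollary_vs_case_k_ge_L_general (Lhat khat : ℝ) (hL : 0 < Lhat)
    (hkL : Lhat ≤ khat) (L k : ℝ) (hLle : L ≤ Lhat) (hk0 : 0 ≤ k) :
    L * Real.log (1 / (1 - khat / (2 * khat + Lhat))) +
        k * Real.log (1 / ((khat / (2 * khat + Lhat)) * (1 - khat / (2 * khat + Lhat)))) ≤
      (1 / 2) * khat + k * Real.log (9 / 2) := by
  set α := khat / (2 * khat + Lhat) with hα
  have hsum : 0 < 2 * khat + Lhat := by linarith
  have hα_third : 1 / 3 ≤ α := by rw [hα, le_div_iff₀ hsum]; linarith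
  have hα_half : α ≤ 1 / 2 := by rw [hα, div_le_iff₀ hsum]; linarith
  have hone_sub : 1 - α = (khat + Lhat) / (2 * khat + Lhat) := by
    rw [hα, eq_div_iff hsum.ne', sub_mul, div_mul_cancel₀ _ hsum.ne']; ring
  have hratio : α / (1 - α) = khat / (khat + Lhat) := by
    rw [hone_sub, hα, div_div_div_cancel_right₀ hsum.ne']
  have hlog_nonneg : 0 ≤ log (1 / (1 - α)) :=
    log_nonneg (by rw [le_div_iff₀ (by linarith)]; linarith)
  have hfirst : L * log (1 / (1 - α)) ≤ 1 / 2 * khat := calc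
    L * log (1 / (1 - α)) ≤ Lhat * log (1 / (1 - α)) :=
      mul_le_mul_of_nonneg_right hLle hlog_nonneg
    _ ≤ Lhat * (khat / (khat + Lhat)) := by
      rw [← hratio]; gcongr; exact log_one_div_one_sub_le (by linarith)
    _ ≤ 1 / 2 * khat := by linarith [mul_div_add_le_half hL hkL]
  have hsecond : k * log (1 / (α * (1 - α))) ≤ k * log (9 / 2) :=
    mul_le_mul_of_nonneg_left (log_one_div_mul_one_sub_le hα_third (by linarith)) hk0
  linarith

theorem corollary_vs_case_k_ge_L (Lhat khat : ℝ) (hL : 0 < Lhat) (hk : 0 < khat)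
    (hkL : Lhat ≤ khat) (L k : ℝ) (hLle : L ≤ Lhat) (hk0 : 0 ≤ k) :
    L * Real.log (1 / (1 - khat / (2 * khat + Lhat))) +
        k * Real.log (1 / ((khat / (2 * khat + Lhat)) * (1 - khat / (2 * khat + Lhat)))) ≤
      (1 / 2) * khat + k * Real.log (9 / 2) :=
  corollary_vs_case_k_ge_L_general Lhat khat hL hkL L k hLle hk0
end
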